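/- arXiv:2109.10045 — 10 statements merged into one kernel-verified Lean document; each statement's English description precedes it below -/
import Mathlib

section
/- Let A₁₁ ∈ ℍ^{m₁×n}, A₂₂ ∈ ℍ^{m₂×n}, B₁₁ ∈ ℍ^{p×q₁}, B₂₂ ∈ ℍ^{p×q₂}, C₁ ∈ ℍ^{m₁×q₁}, C₂ ∈ ℍ^{m₂×q₂} be quaternion matrices with given Moore–Penrose inverses A₁₁⁺, A₂₂⁺, B₁₁⁺, B₂₂⁺, and assume A₁₁L_{A₂₂} = 0 and R_{B₁₁}B₂₂ = 0. Put A₁ := A₂₂L_{A₁₁} with a given Moore–Penrose inverse A₁⁺, and C₁₁ := C₂ − A₂₂A₁₁⁺C₁B₁₁⁺B₂₂. Then there exists X ∈ ℍ^{n×p} with A₁₁XB₁₁ = C₁ and A₂₂XB₂₂ = C₂ if and only if R_{A₁₁}C₁ = 0, C₁L_{B₁₁} = 0, R_{A₂₂}C₂ = 0, C₂L_{B₂₂} = 0 and R_{A₁}C₁₁ = 0. -/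
open Matrix

abbrev Hq : Type := Quaternion ℝ

/-- `Ap` is a Moore–Penrose inverse of `A`. -/
def IsMPInv {m n : Type*} [Fintype m] [Fintype n] (A : Matrix m n Hq) (Ap : Matrix n m Hq) :
    Prop :=
  A * Ap * A = A ∧ Ap * A * Ap = Ap ∧ (A * Ap)ᴴ = A * Ap ∧ (Ap * A)ᴴ = Ap * A

/-- Sandwich rewriting helper: if `B * Bp * C = C'` then `Z * B * Bp * C = Z * C'`. -/
lemma sand {a b c e : ℕ} {B : Matrix (Fin a) (Fin b) Hq} {Bp : Matrix (Fin b) (Fin a) Hq}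
    {C C' : Matrix (Fin a) (Fin c) Hq} (h : B * Bp * C = C')
    (Z : Matrix (Fin e) (Fin a) Hq) :
    Z * B * Bp * C = Z * C' := by
  rw [Matrix.mul_assoc Z B Bp, Matrix.mul_assoc Z (B * Bp) C, h]

/-- Lemma 3.1 (1) ⇔ (2): solvability of the system `A₁₁ X B₁₁ = C₁`, `A₂₂ X B₂₂ = C₂`
under the orthogonality assumptions `A₁₁ L_{A₂₂} = 0` and `R_{B₁₁} B₂₂ = 0`. -/
theorem stmt0 {m₁ m₂ n p q₁ q₂ : ℕ}
    (A₁₁ : Matrix (Fin m₁) (Fin n) Hq) (A₂₂ : Matrix (Fin m₂) (Fin n) Hq)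
    (B₁₁ : Matrix (Fin p) (Fin q₁) Hq) (B₂₂ : Matrix (Fin p) (Fin q₂) Hq)
    (C₁ : Matrix (Fin m₁) (Fin q₁) Hq) (C₂ : Matrix (Fin m₂) (Fin q₂) Hq)
    (A₁₁p : Matrix (Fin n) (Fin m₁) Hq) (A₂₂p : Matrix (Fin n) (Fin m₂) Hq)
    (B₁₁p : Matrix (Fin q₁) (Fin p) Hq) (B₂₂p : Matrix (Fin q₂) (Fin p) Hq)
    (hA₁₁ : IsMPInv A₁₁ A₁₁p) (hA₂₂ : IsMPInv A₂₂ A₂₂p)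
    (hB₁₁ : IsMPInv B₁₁ B₁₁p) (hB₂₂ : IsMPInv B₂₂ B₂₂p)
    (horth₁ : A₁₁ * (1 - A₂₂p * A₂₂) = 0)
    (horth₂ : (1 - B₁₁ * B₁₁p) * B₂₂ = 0)
    (A₁ : Matrix (Fin m₂) (Fin n) Hq) (hA₁ : A₁ = A₂₂ * (1 - A₁₁p * A₁₁))
    (A₁p : Matrix (Fin n) (Fin m₂) Hq) (hA₁p : IsMPInv A₁ A₁p)
    (C₁₁ : Matrix (Fin m₂) (Fin q₂) Hq)
    (hC₁₁ : C₁₁ = C₂ - A₂₂ * A₁₁p * C₁ * B₁₁p * B₂₂) :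
    (∃ X : Matrix (Fin n) (Fin p) Hq, A₁₁ * X * B₁₁ = C₁ ∧ A₂₂ * X * B₂₂ = C₂) ↔
      ((1 - A₁₁ * A₁₁p) * C₁ = 0 ∧ C₁ * (1 - B₁₁p * B₁₁) = 0 ∧
       (1 - A₂₂ * A₂₂p) * C₂ = 0 ∧ C₂ * (1 - B₂₂p * B₂₂) = 0 ∧
       (1 - A₁ * A₁p) * C₁₁ = 0) := by
  obtain ⟨a1, a2, a3, a4⟩ := hA₁₁
  obtain ⟨b1, b2, b3, b4⟩ := hA₂₂
  obtain ⟨c1, c2, c3, c4⟩ := hB₁₁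
  obtain ⟨d1, d2, d3, d4⟩ := hB₂₂
  obtain ⟨e1, e2, e3, e4⟩ := hA₁p
  -- B₁₁ * B₁₁p * B₂₂ = B₂₂
  have hB : B₁₁ * B₁₁p * B₂₂ = B₂₂ := by
    have h := horth₂
    rw [Matrix.sub_mul, Matrix.one_mul, sub_eq_zero] at h
    exact h.symm
  -- the projector L := 1 - A₁₁p * A₁₁ is Hermitian and idempotent
  have hLherm : (1 - A₁₁p * A₁₁)ᴴ = 1 - A₁₁p * A₁₁ := by
    rw [conjTranspose_sub, conjTranspose_one, a4]
  have hPP : A₁₁p * A₁₁ * (A₁₁p * A₁₁) = A₁₁p * A₁₁ := by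
    rw [← Matrix.mul_assoc, a2]
  have hLL : (1 - A₁₁p * A₁₁) * (1 - A₁₁p * A₁₁) = 1 - A₁₁p * A₁₁ := by
    simp only [Matrix.sub_mul, Matrix.mul_sub, Matrix.one_mul, Matrix.mul_one, hPP]
    abel
  have hAL : A₁₁ * (1 - A₁₁p * A₁₁) = 0 := by
    rw [Matrix.mul_sub, Matrix.mul_one, ← Matrix.mul_assoc, a1, sub_self]
  have hA₁L : A₁ * (1 - A₁₁p * A₁₁) = A₁ := by
    rw [hA₁, Matrix.mul_assoc, hLL]
  -- A₁p = (1 - A₁₁p*A₁₁) * A₁p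
  have h5 : A₁p * A₁ * (1 - A₁₁p * A₁₁) = A₁p * A₁ := by
    rw [Matrix.mul_assoc, hA₁L]
  have h6 : (1 - A₁₁p * A₁₁) * (A₁p * A₁) = A₁p * A₁ := by
    have h7 := congrArg conjTranspose h5
    rw [conjTranspose_mul, hLherm, e4] at h7
    exact h7
  have hLA₁p : (1 - A₁₁p * A₁₁) * A₁p = A₁p := by
    conv_lhs => rw [← e2, ← Matrix.mul_assoc, h6, e2]
  have hA11A1p : A₁₁ * A₁p = 0 := by
    conv_lhs => rw [← hLA₁p, ← Matrix.mul_assoc, hAL]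
    exact Matrix.zero_mul A₁p
  have hA22A1p : A₂₂ * A₁p = A₁ * A₁p := by
    conv_lhs => rw [← hLA₁p, ← Matrix.mul_assoc, ← hA₁]
  constructor
  · rintro ⟨X, hX1, hX2⟩
    refine ⟨?_, ?_, ?_, ?_, ?_⟩
    · rw [Matrix.sub_mul, Matrix.one_mul, sub_eq_zero, ← hX1]
      simp only [← Matrix.mul_assoc]
      rw [a1]
    · rw [Matrix.mul_sub, Matrix.mul_one, sub_eq_zero, ← hX1]
      simp only [← Matrix.mul_assoc]
      rw [sand c1]
    · rw [Matrix.sub_mul, Matrix.one_mul, sub_eq_zero, ← hX2]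
      simp only [← Matrix.mul_assoc]
      rw [b1]
    · rw [Matrix.mul_sub, Matrix.mul_one, sub_eq_zero, ← hX2]
      simp only [← Matrix.mul_assoc]
      rw [sand d1]
    · have key : C₁₁ = A₁ * X * B₂₂ := by
        rw [hC₁₁, ← hX1, ← hX2]
        simp only [← Matrix.mul_assoc]
        rw [sand hB (A₂₂ * A₁₁p * A₁₁ * X), hA₁, Matrix.mul_sub, Matrix.mul_one,
          Matrix.sub_mul, Matrix.sub_mul]
        simp only [← Matrix.mul_assoc]
      rw [key, Matrix.sub_mul, Matrix.one_mul, sub_eq_zero]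
      simp only [← Matrix.mul_assoc]
      rw [e1]
  · rintro ⟨r1, r2, r3, r4, r5⟩
    have g1 : A₁₁ * A₁₁p * C₁ = C₁ := by
      rw [Matrix.sub_mul, Matrix.one_mul, sub_eq_zero] at r1; exact r1.symm
    have g2 : C₁ * B₁₁p * B₁₁ = C₁ := by
      rw [Matrix.mul_sub, Matrix.mul_one, sub_eq_zero] at r2
      rw [Matrix.mul_assoc]; exact r2.symm
    have g4 : C₂ * B₂₂p * B₂₂ = C₂ := by
      rw [Matrix.mul_sub, Matrix.mul_one, sub_eq_zero] at r4
      rw [Matrix.mul_assoc]; exact r4.symm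
    have g5 : A₁ * A₁p * C₁₁ = C₁₁ := by
      rw [Matrix.sub_mul, Matrix.one_mul, sub_eq_zero] at r5; exact r5.symm
    have hC11B : C₁₁ * B₂₂p * B₂₂ = C₁₁ := by
      rw [hC₁₁, Matrix.sub_mul, Matrix.sub_mul, g4, sand d1 (A₂₂ * A₁₁p * C₁ * B₁₁p)]
    refine ⟨A₁₁p * C₁ * B₁₁p + A₁p * C₁₁ * B₂₂p, ?_, ?_⟩
    · rw [Matrix.mul_add, Matrix.add_mul]
      simp only [← Matrix.mul_assoc]
      rw [g1, g2, hA11A1p]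
      simp
    · rw [Matrix.mul_add, Matrix.add_mul]
      simp only [← Matrix.mul_assoc]
      rw [hA22A1p, g5, hC11B, hC₁₁]
      abel
end

section
/- Let A₁₁ ∈ ℍ^{m₁×n}, A₂₂ ∈ ℍ^{m₂×n}, B₁₁ ∈ ℍ^{p×q₁}, B₂₂ ∈ ℍ^{p×q₂}, C₁ ∈ ℍ^{m₁×q₁}, C₂ ∈ ℍ^{m₂×q₂} be quaternion matrices with given Moore–Penrose inverses A₁₁⁺, A₂₂⁺, B₁₁⁺, B₂₂⁺, and assume A₁₁L_{A₂₂} = 0 and R_{B₁₁}B₂₂ = 0. Then there exists X ∈ ℍ^{n×p} with A₁₁XB₁₁ = C₁ and A₂₂XB₂₂ = C₂ if and only if A₁₁A₁₁⁺C₁B₁₁⁺B₁₁ = C₁, A₂₂A₂₂⁺C₂B₂₂⁺B₂₂ = C₂ and C₁B₁₁⁺B₂₂ = A₁₁A₂₂⁺C₂. -/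
open Matrix

/-- Lemma 3.1 (1) ⇔ (3): solvability of the system `A₁₁ X B₁₁ = C₁`, `A₂₂ X B₂₂ = C₂`
under the orthogonality assumptions `A₁₁ L_{A₂₂} = 0` and `R_{B₁₁} B₂₂ = 0`. -/
theorem stmt1 {m₁ m₂ n p q₁ q₂ : ℕ}
    (A₁₁ : Matrix (Fin m₁) (Fin n) Hq) (A₂₂ : Matrix (Fin m₂) (Fin n) Hq)
    (B₁₁ : Matrix (Fin p) (Fin q₁) Hq) (B₂₂ : Matrix (Fin p) (Fin q₂) Hq)
    (C₁ : Matrix (Fin m₁) (Fin q₁) Hq) (C₂ : Matrix (Fin m₂) (Fin q₂) Hq)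
    (A₁₁p : Matrix (Fin n) (Fin m₁) Hq) (A₂₂p : Matrix (Fin n) (Fin m₂) Hq)
    (B₁₁p : Matrix (Fin q₁) (Fin p) Hq) (B₂₂p : Matrix (Fin q₂) (Fin p) Hq)
    (hA₁₁ : IsMPInv A₁₁ A₁₁p) (hA₂₂ : IsMPInv A₂₂ A₂₂p)
    (hB₁₁ : IsMPInv B₁₁ B₁₁p) (hB₂₂ : IsMPInv B₂₂ B₂₂p)
    (horth₁ : A₁₁ * (1 - A₂₂p * A₂₂) = 0)
    (horth₂ : (1 - B₁₁ * B₁₁p) * B₂₂ = 0) :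
    (∃ X : Matrix (Fin n) (Fin p) Hq, A₁₁ * X * B₁₁ = C₁ ∧ A₂₂ * X * B₂₂ = C₂) ↔
      (A₁₁ * A₁₁p * C₁ * B₁₁p * B₁₁ = C₁ ∧
       A₂₂ * A₂₂p * C₂ * B₂₂p * B₂₂ = C₂ ∧
       C₁ * B₁₁p * B₂₂ = A₁₁ * A₂₂p * C₂) := by
  -- orthogonality in usable form
  have hO1 : A₁₁ * (A₂₂p * A₂₂) = A₁₁ := by
    have := horth₁
    rw [Matrix.mul_sub, Matrix.mul_one, sub_eq_zero] at this
    exact this.symm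
  have hO2 : B₁₁ * (B₁₁p * B₂₂) = B₂₂ := by
    have := horth₂
    rw [Matrix.sub_mul, Matrix.one_mul, sub_eq_zero, Matrix.mul_assoc] at this
    exact this.symm
  -- head-side quantified cancellation lemmas
  have hA1 : ∀ {k : ℕ} (M : Matrix (Fin n) (Fin k) Hq),
      A₁₁ * (A₁₁p * (A₁₁ * M)) = A₁₁ * M := by
    intro k M
    rw [← Matrix.mul_assoc, ← Matrix.mul_assoc, hA₁₁.1]
  have hA2 : ∀ {k : ℕ} (M : Matrix (Fin n) (Fin k) Hq),
      A₂₂ * (A₂₂p * (A₂₂ * M)) = A₂₂ * M := by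
    intro k M
    rw [← Matrix.mul_assoc, ← Matrix.mul_assoc, hA₂₂.1]
  have hO1' : ∀ {k : ℕ} (M : Matrix (Fin n) (Fin k) Hq),
      A₁₁ * (A₂₂p * (A₂₂ * M)) = A₁₁ * M := by
    intro k M
    rw [← Matrix.mul_assoc, ← Matrix.mul_assoc, Matrix.mul_assoc A₁₁, hO1]
  -- tail-side lemmas
  have hB1 : B₁₁ * (B₁₁p * B₁₁) = B₁₁ := by
    rw [← Matrix.mul_assoc, hB₁₁.1]
  have hB2 : B₂₂ * (B₂₂p * B₂₂) = B₂₂ := by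
    rw [← Matrix.mul_assoc, hB₂₂.1]
  constructor
  · rintro ⟨X, hX1, hX2⟩
    subst hX1; subst hX2
    refine ⟨?_, ?_, ?_⟩
    · simp only [Matrix.mul_assoc, hA1, hB1]
    · simp only [Matrix.mul_assoc, hA2, hB2]
    · simp only [Matrix.mul_assoc, hO1', hO2]
  · rintro ⟨h1, h2, h3⟩
    simp only [Matrix.mul_assoc] at h1 h2 h3
    have hC2 : C₂ * (B₂₂p * B₂₂) = C₂ := by
      conv_lhs => rw [← h2]
      simp only [Matrix.mul_assoc, hB2]
      rw [h2]
    have hC2' : A₂₂ * (A₂₂p * C₂) = C₂ := by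
      calc A₂₂ * (A₂₂p * C₂) = A₂₂ * (A₂₂p * (C₂ * (B₂₂p * B₂₂))) := by rw [hC2]
        _ = C₂ := h2
    refine ⟨A₂₂p * (C₂ * B₂₂p) + A₁₁p * (C₁ * B₁₁p)
        - A₁₁p * (A₁₁ * (A₂₂p * (C₂ * (B₂₂p * (B₁₁ * B₁₁p))))), ?_, ?_⟩
    · simp only [Matrix.mul_add, Matrix.add_mul, Matrix.mul_sub, Matrix.sub_mul,
        Matrix.mul_assoc, hA1, hB1, h1]
      abel
    · simp only [Matrix.mul_add, Matrix.add_mul, Matrix.mul_sub, Matrix.sub_mul,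
        Matrix.mul_assoc, hO2, hC2, hC2', h2, h3]
      abel
end

section
/- Let A₁₁ ∈ ℍ^{m₁×n}, A₂₂ ∈ ℍ^{m₂×n}, B₁₁ ∈ ℍ^{p×q₁}, B₂₂ ∈ ℍ^{p×q₂}, C₁ ∈ ℍ^{m₁×q₁}, C₂ ∈ ℍ^{m₂×q₂} be quaternion matrices with given Moore–Penrose inverses A₁₁⁺, A₂₂⁺, B₁₁⁺, B₂₂⁺. Assume A₁₁L_{A₂₂} = 0, R_{B₁₁}B₂₂ = 0, A₁₁A₁₁⁺C₁B₁₁⁺B₁₁ = C₁, A₂₂A₂₂⁺C₂B₂₂⁺B₂₂ = C₂ and C₁B₁₁⁺B₂₂ = A₁₁A₂₂⁺C₂. Then for all matrices V₁, V₂, V₃ ∈ ℍ^{n×p}, the matrix X₁ := A₁₁⁺C₁B₁₁⁺ + L_{A₁₁}A₂₂⁺C₂B₂₂⁺ + L_{A₂₂}V₁ + V₂R_{B₁₁} + L_{A₁₁}V₃R_{B₂₂} satisfies A₁₁X₁B₁₁ = C₁ and A₂₂X₁B₂₂ = C₂. -/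
open Matrix

/-- Lemma 3.1, Step 1: the proposed formula always solves the system
`A₁₁ X B₁₁ = C₁`, `A₂₂ X B₂₂ = C₂`. -/
theorem stmt2 {m₁ m₂ n p q₁ q₂ : ℕ}
    (A₁₁ : Matrix (Fin m₁) (Fin n) Hq) (A₂₂ : Matrix (Fin m₂) (Fin n) Hq)
    (B₁₁ : Matrix (Fin p) (Fin q₁) Hq) (B₂₂ : Matrix (Fin p) (Fin q₂) Hq)
    (C₁ : Matrix (Fin m₁) (Fin q₁) Hq) (C₂ : Matrix (Fin m₂) (Fin q₂) Hq)
    (A₁₁p : Matrix (Fin n) (Fin m₁) Hq) (A₂₂p : Matrix (Fin n) (Fin m₂) Hq)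
    (B₁₁p : Matrix (Fin q₁) (Fin p) Hq) (B₂₂p : Matrix (Fin q₂) (Fin p) Hq)
    (hA₁₁ : IsMPInv A₁₁ A₁₁p) (hA₂₂ : IsMPInv A₂₂ A₂₂p)
    (hB₁₁ : IsMPInv B₁₁ B₁₁p) (hB₂₂ : IsMPInv B₂₂ B₂₂p)
    (horth₁ : A₁₁ * (1 - A₂₂p * A₂₂) = 0)
    (horth₂ : (1 - B₁₁ * B₁₁p) * B₂₂ = 0)
    (hc₁ : A₁₁ * A₁₁p * C₁ * B₁₁p * B₁₁ = C₁)
    (hc₂ : A₂₂ * A₂₂p * C₂ * B₂₂p * B₂₂ = C₂)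
    (hc₃ : C₁ * B₁₁p * B₂₂ = A₁₁ * A₂₂p * C₂) :
    ∀ V₁ V₂ V₃ : Matrix (Fin n) (Fin p) Hq,
      A₁₁ * (A₁₁p * C₁ * B₁₁p + (1 - A₁₁p * A₁₁) * A₂₂p * C₂ * B₂₂p
          + (1 - A₂₂p * A₂₂) * V₁ + V₂ * (1 - B₁₁ * B₁₁p)
          + (1 - A₁₁p * A₁₁) * V₃ * (1 - B₂₂ * B₂₂p)) * B₁₁ = C₁ ∧
      A₂₂ * (A₁₁p * C₁ * B₁₁p + (1 - A₁₁p * A₁₁) * A₂₂p * C₂ * B₂₂p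
          + (1 - A₂₂p * A₂₂) * V₁ + V₂ * (1 - B₁₁ * B₁₁p)
          + (1 - A₁₁p * A₁₁) * V₃ * (1 - B₂₂ * B₂₂p)) * B₂₂ = C₂ := by
  obtain ⟨a1, -, -, -⟩ := hA₁₁
  obtain ⟨a2, -, -, -⟩ := hA₂₂
  obtain ⟨b1, -, -, -⟩ := hB₁₁
  obtain ⟨b2, -, -, -⟩ := hB₂₂
  -- basic consequences, right-associated
  have o1 : A₁₁ * (A₂₂p * A₂₂) = A₁₁ := by
    have h := horth₁
    rwa [Matrix.mul_sub, Matrix.mul_one, sub_eq_zero, eq_comm] at h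
  have r2 : B₁₁ * (B₁₁p * B₂₂) = B₂₂ := by
    have h := horth₂
    rw [Matrix.sub_mul, Matrix.one_mul, sub_eq_zero, eq_comm, Matrix.mul_assoc] at h
    exact h
  have s4 : B₁₁ * (B₁₁p * B₁₁) = B₁₁ := by rw [← Matrix.mul_assoc]; exact b1
  have r1 : B₂₂ * (B₂₂p * B₂₂) = B₂₂ := by rw [← Matrix.mul_assoc]; exact b2
  have s1 : A₁₁ * (A₁₁p * (C₁ * (B₁₁p * B₁₁))) = C₁ := by
    rw [← Matrix.mul_assoc, ← Matrix.mul_assoc, ← Matrix.mul_assoc]; exact hc₁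
  have rC2 : A₂₂ * (A₂₂p * (C₂ * (B₂₂p * B₂₂))) = C₂ := by
    rw [← Matrix.mul_assoc, ← Matrix.mul_assoc, ← Matrix.mul_assoc]; exact hc₂
  have rC3 : C₁ * (B₁₁p * B₂₂) = A₁₁ * (A₂₂p * C₂) := by
    rw [← Matrix.mul_assoc, ← Matrix.mul_assoc]; exact hc₃
  have s2 : ∀ W : Matrix (Fin n) (Fin q₁) Hq, A₁₁ * (A₁₁p * (A₁₁ * W)) = A₁₁ * W := by
    intro W
    rw [← Matrix.mul_assoc, ← Matrix.mul_assoc, a1]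
  have s3 : ∀ W : Matrix (Fin n) (Fin q₁) Hq, A₁₁ * (A₂₂p * (A₂₂ * W)) = A₁₁ * W := by
    intro W
    rw [← Matrix.mul_assoc, ← Matrix.mul_assoc, Matrix.mul_assoc A₁₁ A₂₂p A₂₂, o1]
  have r3 : ∀ W : Matrix (Fin n) (Fin q₂) Hq, A₂₂ * (A₂₂p * (A₂₂ * W)) = A₂₂ * W := by
    intro W
    rw [← Matrix.mul_assoc, ← Matrix.mul_assoc, a2]
  have rK : A₁₁ * (A₂₂p * (C₂ * (B₂₂p * B₂₂))) = A₁₁ * (A₂₂p * C₂) := by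
    conv_lhs => rw [← o1, Matrix.mul_assoc, Matrix.mul_assoc, rC2]
  intro V₁ V₂ V₃
  constructor
  · simp only [Matrix.sub_mul, Matrix.mul_sub, Matrix.add_mul, Matrix.mul_add,
      Matrix.one_mul, Matrix.mul_one, Matrix.mul_assoc]
    rw [s1, s2, s2, s2, s3, s4]
    abel
  · simp only [Matrix.sub_mul, Matrix.mul_sub, Matrix.add_mul, Matrix.mul_add,
      Matrix.one_mul, Matrix.mul_one, Matrix.mul_assoc]
    rw [r1, r2, r3, rC2, rC3, rK]
    abel
end

section
/- Let A₁₁ ∈ ℍ^{m₁×n}, A₂₂ ∈ ℍ^{m₂×n}, B₁₁ ∈ ℍ^{p×q₁}, B₂₂ ∈ ℍ^{p×q₂}, C₁ ∈ ℍ^{m₁×q₁}, C₂ ∈ ℍ^{m₂×q₂} be quaternion matrices with given Moore–Penrose inverses A₁₁⁺, A₂₂⁺, B₁₁⁺, B₂₂⁺, and assume A₁₁L_{A₂₂} = 0 and R_{B₁₁}B₂₂ = 0. If X₀₁ ∈ ℍ^{n×p} satisfies A₁₁X₀₁B₁₁ = C₁ and A₂₂X₀₁B₂₂ = C₂, then there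 exist V₁, V₂, V₃ ∈ ℍ^{n×p} (namely V₁ = X₀₁B₂₂B₂₂⁺, V₂ = X₀₁, V₃ = X₀₁B₁₁B₁₁⁺) such that X₀₁ = A₁₁⁺C₁B₁₁⁺ + L_{A₁₁}A₂₂⁺C₂B₂₂⁺ + L_{A₂₂}V₁ + V₂R_{B₁₁} + L_{A₁₁}V₃R_{B₂₂}. -/
open Matrix

/-- Lemma 3.1, Step 2: every solution of the system `A₁₁ X B₁₁ = C₁`, `A₂₂ X B₂₂ = C₂`
has the given form, with explicit witnesses `V₁ = X₀₁B₂₂B₂₂⁺`, `V₂ = X₀₁`,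
`V₃ = X₀₁B₁₁B₁₁⁺`. -/
theorem stmt3 {m₁ m₂ n p q₁ q₂ : ℕ}
    (A₁₁ : Matrix (Fin m₁) (Fin n) Hq) (A₂₂ : Matrix (Fin m₂) (Fin n) Hq)
    (B₁₁ : Matrix (Fin p) (Fin q₁) Hq) (B₂₂ : Matrix (Fin p) (Fin q₂) Hq)
    (C₁ : Matrix (Fin m₁) (Fin q₁) Hq) (C₂ : Matrix (Fin m₂) (Fin q₂) Hq)
    (A₁₁p : Matrix (Fin n) (Fin m₁) Hq) (A₂₂p : Matrix (Fin n) (Fin m₂) Hq)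
    (B₁₁p : Matrix (Fin q₁) (Fin p) Hq) (B₂₂p : Matrix (Fin q₂) (Fin p) Hq)
    (hA₁₁ : IsMPInv A₁₁ A₁₁p) (hA₂₂ : IsMPInv A₂₂ A₂₂p)
    (hB₁₁ : IsMPInv B₁₁ B₁₁p) (hB₂₂ : IsMPInv B₂₂ B₂₂p)
    (horth₁ : A₁₁ * (1 - A₂₂p * A₂₂) = 0)
    (horth₂ : (1 - B₁₁ * B₁₁p) * B₂₂ = 0)
    (X₀₁ : Matrix (Fin n) (Fin p) Hq)
    (hX₁ : A₁₁ * X₀₁ * B₁₁ = C₁) (hX₂ : A₂₂ * X₀₁ * B₂₂ = C₂) :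
    ∃ V₁ V₂ V₃ : Matrix (Fin n) (Fin p) Hq,
      V₁ = X₀₁ * B₂₂ * B₂₂p ∧ V₂ = X₀₁ ∧ V₃ = X₀₁ * B₁₁ * B₁₁p ∧
      X₀₁ = A₁₁p * C₁ * B₁₁p + (1 - A₁₁p * A₁₁) * A₂₂p * C₂ * B₂₂p
          + (1 - A₂₂p * A₂₂) * V₁ + V₂ * (1 - B₁₁ * B₁₁p)
          + (1 - A₁₁p * A₁₁) * V₃ * (1 - B₂₂ * B₂₂p) := by
  refine ⟨X₀₁ * B₂₂ * B₂₂p, X₀₁, X₀₁ * B₁₁ * B₁₁p, rfl, rfl, rfl, ?_⟩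
  subst hX₁ hX₂
  have e1 : A₁₁ * (A₂₂p * A₂₂) = A₁₁ := by
    have h := horth₁
    rw [Matrix.mul_sub, Matrix.mul_one, sub_eq_zero] at h
    exact h.symm
  have e2 : B₁₁ * (B₁₁p * B₂₂) = B₂₂ := by
    have h := horth₂
    rw [Matrix.sub_mul, Matrix.one_mul, sub_eq_zero] at h
    rw [Matrix.mul_assoc] at h
    exact h.symm
  have h1 : ∀ M : Matrix (Fin n) (Fin p) Hq,
      A₁₁ * (A₂₂p * (A₂₂ * M)) = A₁₁ * M := by
    intro M
    rw [← Matrix.mul_assoc A₂₂p, ← Matrix.mul_assoc, e1]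
  have h2 : ∀ M : Matrix (Fin q₂) (Fin p) Hq,
      B₁₁ * (B₁₁p * (B₂₂ * M)) = B₂₂ * M := by
    intro M
    rw [← Matrix.mul_assoc B₁₁p, ← Matrix.mul_assoc, e2]
  simp only [Matrix.mul_sub, Matrix.sub_mul, Matrix.mul_one, Matrix.one_mul,
    Matrix.mul_assoc, h1, h2]
  abel
end

section
/- Let A₁ ∈ ℍ^{p×a}, B₁ ∈ ℍ^{b×q}, A₂ ∈ ℍ^{p×a₂}, B₂ ∈ ℍ^{b₂×q}, A₃ ∈ ℍ^{p×a₃}, B₃ ∈ ℍ^{b₃×q}, A₄ ∈ ℍ^{p×a₄}, B₄ ∈ ℍ^{b₄×q}, B ∈ ℍ^{p×q} be quaternion matrices with given Moore–Penrose inverses A₁⁺ and B₁⁺. Then the equation A₁X₁ + X₂B₁ + A₂Y₁B₂ + A₃Y₂B₃ + A₄Y₃B₄ = B has a solution (X₁, X₂, Y₁, Y₂, Y₃) if and only if the equation (R_{A₁}A₂)Y₁(B₂L_{B₁}) + (R_{A₁}A₃)Y₂(B₃L_{B₁}) + (R_{A₁}A₄)Y₃(B₄L_{B₁}) = R_{A₁}B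 L_{B₁} has a solution (Y₁, Y₂, Y₃). -/
open Matrix

/-- Solvability of `A₁X₁ + X₂B₁ + A₂Y₁B₂ + A₃Y₂B₃ + A₄Y₃B₄ = B` is equivalent to
solvability of the reduced three-term equation obtained by multiplying with
`R_{A₁}` and `L_{B₁}`. -/
theorem stmt6 {p a b q a₂ b₂ a₃ b₃ a₄ b₄ : ℕ}
    (A₁ : Matrix (Fin p) (Fin a) Hq) (B₁ : Matrix (Fin b) (Fin q) Hq)
    (A₂ : Matrix (Fin p) (Fin a₂) Hq) (B₂ : Matrix (Fin b₂) (Fin q) Hq)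
    (A₃ : Matrix (Fin p) (Fin a₃) Hq) (B₃ : Matrix (Fin b₃) (Fin q) Hq)
    (A₄ : Matrix (Fin p) (Fin a₄) Hq) (B₄ : Matrix (Fin b₄) (Fin q) Hq)
    (B : Matrix (Fin p) (Fin q) Hq)
    (A₁p : Matrix (Fin a) (Fin p) Hq) (B₁p : Matrix (Fin q) (Fin b) Hq)
    (hA₁ : IsMPInv A₁ A₁p) (hB₁ : IsMPInv B₁ B₁p) :
    (∃ (X₁ : Matrix (Fin a) (Fin q) Hq) (X₂ : Matrix (Fin p) (Fin b) Hq)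
        (Y₁ : Matrix (Fin a₂) (Fin b₂) Hq) (Y₂ : Matrix (Fin a₃) (Fin b₃) Hq)
        (Y₃ : Matrix (Fin a₄) (Fin b₄) Hq),
        A₁ * X₁ + X₂ * B₁ + A₂ * Y₁ * B₂ + A₃ * Y₂ * B₃ + A₄ * Y₃ * B₄ = B) ↔
    (∃ (Y₁ : Matrix (Fin a₂) (Fin b₂) Hq) (Y₂ : Matrix (Fin a₃) (Fin b₃) Hq)
        (Y₃ : Matrix (Fin a₄) (Fin b₄) Hq),
        ((1 - A₁ * A₁p) * A₂) * Y₁ * (B₂ * (1 - B₁p * B₁))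
          + ((1 - A₁ * A₁p) * A₃) * Y₂ * (B₃ * (1 - B₁p * B₁))
          + ((1 - A₁ * A₁p) * A₄) * Y₃ * (B₄ * (1 - B₁p * B₁))
          = (1 - A₁ * A₁p) * B * (1 - B₁p * B₁)) := by
  obtain ⟨hA1, -, -, -⟩ := hA₁
  obtain ⟨hB1, -, -, -⟩ := hB₁
  have hRA : ∀ X : Matrix (Fin a) (Fin q) Hq, (1 - A₁ * A₁p) * (A₁ * X) = 0 := by
    intro X
    rw [← Matrix.mul_assoc, Matrix.sub_mul, Matrix.one_mul, hA1, sub_self, Matrix.zero_mul]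
  have hBL : ∀ X : Matrix (Fin p) (Fin b) Hq, (X * B₁) * (1 - B₁p * B₁) = 0 := by
    intro X
    rw [Matrix.mul_assoc, Matrix.mul_sub, Matrix.mul_one, ← Matrix.mul_assoc, hB1, sub_self,
      Matrix.mul_zero]
  -- key identity: R * D * L = 0 → A₁X₁ + X₂B₁ = D is solvable
  have solve : ∀ D : Matrix (Fin p) (Fin q) Hq, (1 - A₁ * A₁p) * D * (1 - B₁p * B₁) = 0 →
      ∃ (X₁ : Matrix (Fin a) (Fin q) Hq) (X₂ : Matrix (Fin p) (Fin b) Hq),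
        A₁ * X₁ + X₂ * B₁ = D := by
    intro D hD
    refine ⟨A₁p * D, (1 - A₁ * A₁p) * D * B₁p, ?_⟩
    have expand : A₁ * (A₁p * D) + ((1 - A₁ * A₁p) * D * B₁p) * B₁
        = D - (1 - A₁ * A₁p) * D * (1 - B₁p * B₁) := by
      simp only [Matrix.sub_mul, Matrix.mul_sub, Matrix.one_mul, Matrix.mul_one,
        Matrix.mul_assoc]
      abel
    rw [expand, hD, sub_zero]
  constructor
  · rintro ⟨X₁, X₂, Y₁, Y₂, Y₃, h⟩
    refine ⟨Y₁, Y₂, Y₃, ?_⟩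
    have h2 := congrArg (fun M => (1 - A₁ * A₁p) * M * (1 - B₁p * B₁)) h
    simp only [Matrix.mul_add, Matrix.add_mul] at h2
    rw [← h2, hRA X₁, Matrix.zero_mul, Matrix.mul_assoc (1 - A₁ * A₁p) (X₂ * B₁), hBL X₂,
      Matrix.mul_zero]
    simp only [Matrix.mul_assoc, zero_add, add_zero]
  · rintro ⟨Y₁, Y₂, Y₃, h⟩
    have hC : (1 - A₁ * A₁p) * (A₂ * Y₁ * B₂ + A₃ * Y₂ * B₃ + A₄ * Y₃ * B₄) * (1 - B₁p * B₁)
        = (1 - A₁ * A₁p) * B * (1 - B₁p * B₁) := by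
      rw [← h]
      simp only [Matrix.mul_add, Matrix.add_mul, Matrix.mul_assoc]
    have hside : (1 - A₁ * A₁p) * (B - (A₂ * Y₁ * B₂ + A₃ * Y₂ * B₃ + A₄ * Y₃ * B₄))
        * (1 - B₁p * B₁) = 0 := by
      rw [Matrix.mul_sub (1 - A₁ * A₁p), Matrix.sub_mul, hC, sub_self]
    obtain ⟨X₁, X₂, hX⟩ := solve (B - (A₂ * Y₁ * B₂ + A₃ * Y₂ * B₃ + A₄ * Y₃ * B₄)) hside
    refine ⟨X₁, X₂, Y₁, Y₂, Y₃, ?_⟩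
    calc A₁ * X₁ + X₂ * B₁ + A₂ * Y₁ * B₂ + A₃ * Y₂ * B₃ + A₄ * Y₃ * B₄
        = (A₁ * X₁ + X₂ * B₁) + (A₂ * Y₁ * B₂ + A₃ * Y₂ * B₃ + A₄ * Y₃ * B₄) := by abel
      _ = (B - (A₂ * Y₁ * B₂ + A₃ * Y₂ * B₃ + A₄ * Y₃ * B₄))
            + (A₂ * Y₁ * B₂ + A₃ * Y₂ * B₃ + A₄ * Y₃ * B₄) := by rw [hX]
      _ = B := by abel
end

section
/- Let A₁₁ ∈ ℍ^{m×n₁}, B₁₁ ∈ ℍ^{p₁×q}, A₂₂ ∈ ℍ^{m×n₂}, B₂₂ ∈ ℍ^{p₂×q}, A₃₃ ∈ ℍ^{m×n₃}, B₃₃ ∈ ℍ^{p₃×q}, T₁ ∈ ℍ^{m×q} be quaternion matrices with given Moore–Penrose inverses of A₁₁, B₁₁, A₂₂, B₂₂, M₁ := R_{A₁₁}A₂₂ and N₁ := B₂₂L_{B₁₁}. Put C = R_{M₁}R_{A₁₁}, D = L_{B₁₁}L_{N₁}, C₁ = CA₃₃, C₂ = R_{A₁₁}A₃₃, C₃ =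 R_{A₂₂}A₃₃, C₄ = A₃₃, D₁ = B₃₃, D₂ = B₃₃L_{B₂₂}, D₃ = B₃₃L_{B₁₁}, D₄ = B₃₃D, E₁ = CT₁, E₂ = R_{A₁₁}T₁L_{B₂₂}, E₃ = R_{A₂₂}T₁L_{B₁₁}, E₄ = T₁D. Then the equation A₁₁Y₁B₁₁ + A₂₂Y₂B₂₂ + A₃₃Y₃B₃₃ = T₁ has a solution (Y₁, Y₂, Y₃) if and only if there exists a matrix Y₃ ∈ ℍ^{n₃×p₃} satisfying simultaneously C₁Y₃D₁ = E₁, C₂Y₃D₂ = E₂, C₃Y₃D₃ = E₃ and C₄Y₃D₄ = E₄. -/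
open Matrix

section Helpers

variable {a b c : ℕ}

private lemma killL (A : Matrix (Fin a) (Fin b) Hq) (Ap : Matrix (Fin b) (Fin a) Hq)
    (h : A * Ap * A = A) : (1 - A * Ap) * A = 0 := by
  rw [Matrix.sub_mul, Matrix.one_mul, h, sub_self]

private lemma killR (B : Matrix (Fin a) (Fin b) Hq) (Bp : Matrix (Fin b) (Fin a) Hq)
    (h : B * Bp * B = B) : B * (1 - Bp * B) = 0 := by
  rw [Matrix.mul_sub, Matrix.mul_one, ← Matrix.mul_assoc, h, sub_self]

private lemma killLX (A : Matrix (Fin a) (Fin b) Hq) (Ap : Matrix (Fin b) (Fin a) Hq)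
    (h : A * Ap * A = A) (X : Matrix (Fin b) (Fin c) Hq) :
    (1 - A * Ap) * (A * X) = 0 := by
  rw [← Matrix.mul_assoc, killL A Ap h, Matrix.zero_mul]

private lemma absorbX (A : Matrix (Fin a) (Fin b) Hq) (Ap : Matrix (Fin b) (Fin a) Hq)
    (h : A * Ap * A = A) (X : Matrix (Fin b) (Fin c) Hq) :
    A * (Ap * (A * X)) = A * X := by
  rw [← Matrix.mul_assoc, ← Matrix.mul_assoc, h]

end Helpers

/-- Reduction of `A₁₁Y₁B₁₁ + A₂₂Y₂B₂₂ + A₃₃Y₃B₃₃ = T₁` to a system of four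
two-sided equations in `Y₃`. -/
theorem stmt7 {m q n₁ p₁ n₂ p₂ n₃ p₃ : ℕ}
    (A₁₁ : Matrix (Fin m) (Fin n₁) Hq) (B₁₁ : Matrix (Fin p₁) (Fin q) Hq)
    (A₂₂ : Matrix (Fin m) (Fin n₂) Hq) (B₂₂ : Matrix (Fin p₂) (Fin q) Hq)
    (A₃₃ : Matrix (Fin m) (Fin n₃) Hq) (B₃₃ : Matrix (Fin p₃) (Fin q) Hq)
    (T₁ : Matrix (Fin m) (Fin q) Hq)
    (A₁₁p : Matrix (Fin n₁) (Fin m) Hq) (B₁₁p : Matrix (Fin q) (Fin p₁) Hq)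
    (A₂₂p : Matrix (Fin n₂) (Fin m) Hq) (B₂₂p : Matrix (Fin q) (Fin p₂) Hq)
    (hA₁₁ : IsMPInv A₁₁ A₁₁p) (hB₁₁ : IsMPInv B₁₁ B₁₁p)
    (hA₂₂ : IsMPInv A₂₂ A₂₂p) (hB₂₂ : IsMPInv B₂₂ B₂₂p)
    (M₁ : Matrix (Fin m) (Fin n₂) Hq) (hM₁ : M₁ = (1 - A₁₁ * A₁₁p) * A₂₂)
    (N₁ : Matrix (Fin p₂) (Fin q) Hq) (hN₁ : N₁ = B₂₂ * (1 - B₁₁p * B₁₁))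
    (M₁p : Matrix (Fin n₂) (Fin m) Hq) (hM₁p : IsMPInv M₁ M₁p)
    (N₁p : Matrix (Fin q) (Fin p₂) Hq) (hN₁p : IsMPInv N₁ N₁p)
    (C : Matrix (Fin m) (Fin m) Hq) (hC : C = (1 - M₁ * M₁p) * (1 - A₁₁ * A₁₁p))
    (D : Matrix (Fin q) (Fin q) Hq) (hD : D = (1 - B₁₁p * B₁₁) * (1 - N₁p * N₁))
    (C₁ : Matrix (Fin m) (Fin n₃) Hq) (hC₁ : C₁ = C * A₃₃)
    (C₂ : Matrix (Fin m) (Fin n₃) Hq) (hC₂ : C₂ = (1 - A₁₁ * A₁₁p) * A₃₃)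
    (C₃ : Matrix (Fin m) (Fin n₃) Hq) (hC₃ : C₃ = (1 - A₂₂ * A₂₂p) * A₃₃)
    (C₄ : Matrix (Fin m) (Fin n₃) Hq) (hC₄ : C₄ = A₃₃)
    (D₁ : Matrix (Fin p₃) (Fin q) Hq) (hD₁ : D₁ = B₃₃)
    (D₂ : Matrix (Fin p₃) (Fin q) Hq) (hD₂ : D₂ = B₃₃ * (1 - B₂₂p * B₂₂))
    (D₃ : Matrix (Fin p₃) (Fin q) Hq) (hD₃ : D₃ = B₃₃ * (1 - B₁₁p * B₁₁))
    (D₄ : Matrix (Fin p₃) (Fin q) Hq) (hD₄ : D₄ = B₃₃ * D)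
    (E₁ : Matrix (Fin m) (Fin q) Hq) (hE₁ : E₁ = C * T₁)
    (E₂ : Matrix (Fin m) (Fin q) Hq)
    (hE₂ : E₂ = (1 - A₁₁ * A₁₁p) * T₁ * (1 - B₂₂p * B₂₂))
    (E₃ : Matrix (Fin m) (Fin q) Hq)
    (hE₃ : E₃ = (1 - A₂₂ * A₂₂p) * T₁ * (1 - B₁₁p * B₁₁))
    (E₄ : Matrix (Fin m) (Fin q) Hq) (hE₄ : E₄ = T₁ * D) :
    (∃ (Y₁ : Matrix (Fin n₁) (Fin p₁) Hq) (Y₂ : Matrix (Fin n₂) (Fin p₂) Hq)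
        (Y₃ : Matrix (Fin n₃) (Fin p₃) Hq),
        A₁₁ * Y₁ * B₁₁ + A₂₂ * Y₂ * B₂₂ + A₃₃ * Y₃ * B₃₃ = T₁) ↔
      (∃ Y₃ : Matrix (Fin n₃) (Fin p₃) Hq,
        C₁ * Y₃ * D₁ = E₁ ∧ C₂ * Y₃ * D₂ = E₂ ∧ C₃ * Y₃ * D₃ = E₃ ∧ C₄ * Y₃ * D₄ = E₄) := by
  have pA := hA₁₁.1
  have pB := hB₁₁.1
  have pA2 := hA₂₂.1
  have pB2 := hB₂₂.1
  have pM := hM₁p.1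
  have pN := hN₁p.1
  have kA : ∀ {k : ℕ} (X : Matrix (Fin n₁) (Fin k) Hq),
      (1 - A₁₁ * A₁₁p) * (A₁₁ * X) = 0 := by
    intro k X; exact killLX _ _ pA X
  have kA2 : ∀ {k : ℕ} (X : Matrix (Fin n₂) (Fin k) Hq),
      (1 - A₂₂ * A₂₂p) * (A₂₂ * X) = 0 := by
    intro k X; exact killLX _ _ pA2 X
  have kMA : ∀ {k : ℕ} (X : Matrix (Fin n₂) (Fin k) Hq),
      (1 - M₁ * M₁p) * ((1 - A₁₁ * A₁₁p) * (A₂₂ * X)) = 0 := by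
    intro k X
    rw [← Matrix.mul_assoc (1 - A₁₁ * A₁₁p) A₂₂ X, ← hM₁]
    exact killLX _ _ pM X
  have kB : B₁₁ * (1 - B₁₁p * B₁₁) = 0 := killR _ _ pB
  have kB2 : B₂₂ * (1 - B₂₂p * B₂₂) = 0 := killR _ _ pB2
  have kN : N₁ * (1 - N₁p * N₁) = 0 := killR _ _ pN
  have kBD : B₂₂ * ((1 - B₁₁p * B₁₁) * (1 - N₁p * N₁)) = 0 := by
    rw [← Matrix.mul_assoc, ← hN₁, kN]
  have kB1D : B₁₁ * ((1 - B₁₁p * B₁₁) * (1 - N₁p * N₁)) = 0 := by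
    rw [← Matrix.mul_assoc, kB, Matrix.zero_mul]
  constructor
  · rintro ⟨Y₁, Y₂, Y₃, hsol⟩
    refine ⟨Y₃, ?_, ?_, ?_, ?_⟩
    · rw [hC₁, hD₁, hE₁, hC, ← hsol]
      simp only [Matrix.mul_add, Matrix.add_mul, Matrix.mul_assoc, kA, kMA,
        Matrix.mul_zero, Matrix.zero_mul, zero_add, add_zero]
    · rw [hC₂, hD₂, hE₂, ← hsol]
      simp only [Matrix.mul_add, Matrix.add_mul, Matrix.mul_assoc, kA, kB2,
        Matrix.mul_zero, Matrix.zero_mul, zero_add, add_zero]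
    · rw [hC₃, hD₃, hE₃, ← hsol]
      simp only [Matrix.mul_add, Matrix.add_mul, Matrix.mul_assoc, kA2, kB,
        Matrix.mul_zero, Matrix.zero_mul, zero_add, add_zero]
    · rw [hC₄, hD₄, hE₄, hD, ← hsol]
      simp only [Matrix.mul_add, Matrix.add_mul, Matrix.mul_assoc, kBD, kB1D,
        Matrix.mul_zero, Matrix.zero_mul, zero_add, add_zero]
  · rintro ⟨Y₃, e1, e2, e3, e4⟩
    rw [hC₁, hD₁, hE₁, hC] at e1
    rw [hC₂, hD₂, hE₂] at e2
    rw [hC₃, hD₃, hE₃] at e3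
    rw [hC₄, hD₄, hE₄, hD] at e4
    set RA := 1 - A₁₁ * A₁₁p with hRA
    set LB := 1 - B₁₁p * B₁₁ with hLB
    set RA2 := 1 - A₂₂ * A₂₂p with hRA2
    set LB2 := 1 - B₂₂p * B₂₂ with hLB2
    set RM := 1 - M₁ * M₁p with hRM
    set LN := 1 - N₁p * N₁ with hLN
    set LM := 1 - M₁p * M₁ with hLM
    simp only [Matrix.mul_assoc] at e1 e2 e3 e4
    set T' := T₁ - A₃₃ * Y₃ * B₃₃ with hT'
    set F := RA * T' with hF
    set G := T' * LB with hG
    -- the four reduced conditions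
    have z1 : RM * F = 0 := by
      rw [hF, hT']
      simp only [Matrix.mul_sub, Matrix.mul_assoc]
      rw [e1]; exact sub_self _
    have h1 : M₁ * (M₁p * F) = F := by
      rw [hRM, Matrix.sub_mul, Matrix.one_mul, Matrix.mul_assoc] at z1
      exact (sub_eq_zero.mp z1).symm
    have z2 : F * LB2 = 0 := by
      rw [hF, hT']
      simp only [Matrix.sub_mul, Matrix.mul_sub, Matrix.mul_assoc]
      rw [e2]; exact sub_self _
    have h2 : F * B₂₂p * B₂₂ = F := by
      rw [hLB2, Matrix.mul_sub, Matrix.mul_one, ← Matrix.mul_assoc] at z2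
      exact (sub_eq_zero.mp z2).symm
    have h2r : F * (B₂₂p * B₂₂) = F := by rw [← Matrix.mul_assoc]; exact h2
    have h2X : ∀ {k : ℕ} (X : Matrix (Fin q) (Fin k) Hq),
        F * (B₂₂p * (B₂₂ * X)) = F * X := by
      intro k X; rw [← Matrix.mul_assoc, ← Matrix.mul_assoc, h2]
    have z3 : RA2 * G = 0 := by
      rw [hG, hT']
      simp only [Matrix.sub_mul, Matrix.mul_sub, Matrix.mul_assoc]
      rw [e3]; exact sub_self _
    have h3 : A₂₂ * (A₂₂p * G) = G := by
      rw [hRA2, Matrix.sub_mul, Matrix.one_mul, Matrix.mul_assoc] at z3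
      exact (sub_eq_zero.mp z3).symm
    have z4 : G * LN = 0 := by
      rw [hG, hT']
      simp only [Matrix.sub_mul, Matrix.mul_assoc]
      rw [e4]; exact sub_self _
    have h4 : G * N₁p * N₁ = G := by
      rw [hLN, Matrix.mul_sub, Matrix.mul_one, ← Matrix.mul_assoc] at z4
      exact (sub_eq_zero.mp z4).symm
    have h4r : G * (N₁p * N₁) = G := by rw [← Matrix.mul_assoc]; exact h4
    -- auxiliary identities
    have kMLM : ∀ {k : ℕ} (X : Matrix (Fin n₂) (Fin k) Hq), M₁ * (LM * X) = 0 := by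
      intro k X
      rw [← Matrix.mul_assoc, hLM, killR M₁ M₁p pM, Matrix.zero_mul]
    have hu : F * (B₂₂p * N₁) = M₁ * (A₂₂p * G) := by
      calc F * (B₂₂p * N₁) = F * (B₂₂p * (B₂₂ * LB)) := by rw [hN₁]
        _ = F * LB := h2X LB
        _ = RA * (T' * LB) := by rw [hF, Matrix.mul_assoc]
        _ = RA * G := by rw [← hG]
        _ = RA * (A₂₂ * (A₂₂p * G)) := by rw [h3]
        _ = M₁ * (A₂₂p * G) := by rw [← Matrix.mul_assoc, ← hM₁]
    set Y₂ := M₁p * F * B₂₂p + LM * (A₂₂p * (G * N₁p)) with hY₂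
    have ga : M₁ * (Y₂ * B₂₂) = F := by
      rw [hY₂]
      simp only [Matrix.add_mul, Matrix.mul_add, Matrix.mul_assoc, kMLM, h2r, h1,
        add_zero]
    have gb : A₂₂ * (Y₂ * N₁) = G := by
      rw [hY₂]
      simp only [Matrix.add_mul, Matrix.mul_add, Matrix.mul_assoc]
      rw [hu, h4r, hLM]
      simp only [Matrix.sub_mul, Matrix.one_mul, Matrix.mul_sub, Matrix.mul_assoc, h3]
      abel
    set S := T' - A₂₂ * (Y₂ * B₂₂) with hS
    have zA : RA * S = 0 := by
      rw [hS, Matrix.mul_sub, ← hF, ← Matrix.mul_assoc, ← hM₁, ga, sub_self]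
    have sA : A₁₁ * (A₁₁p * S) = S := by
      rw [hRA, Matrix.sub_mul, Matrix.one_mul, Matrix.mul_assoc] at zA
      exact (sub_eq_zero.mp zA).symm
    have zB : S * LB = 0 := by
      rw [hS, Matrix.sub_mul, ← hG, Matrix.mul_assoc, Matrix.mul_assoc Y₂ B₂₂ LB, ← hN₁, gb, sub_self]
    have sB : S * B₁₁p * B₁₁ = S := by
      rw [hLB, Matrix.mul_sub, Matrix.mul_one, ← Matrix.mul_assoc] at zB
      exact (sub_eq_zero.mp zB).symm
    refine ⟨A₁₁p * S * B₁₁p, Y₂, Y₃, ?_⟩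
    have hfin : A₁₁ * (A₁₁p * S * B₁₁p) * B₁₁ = S := by
      calc A₁₁ * (A₁₁p * S * B₁₁p) * B₁₁
          = A₁₁ * (A₁₁p * (S * B₁₁p * B₁₁)) := by simp only [Matrix.mul_assoc]
        _ = A₁₁ * (A₁₁p * S) := by rw [sB]
        _ = S := sA
    rw [hfin, hS, hT', ← Matrix.mul_assoc A₂₂ Y₂ B₂₂]
    abel
end

section
/- Let A₁ ∈ ℍ^{m×n}, B₁ ∈ ℍ^{p×q} and C₁ ∈ ℍ^{m×q} be quaternion matrices with given Moore–Penrose inverses A₁⁺ and B₁⁺, and assume R_{A₁}C₁L_{B₁} = 0. Then: (a) for all matrices U₁ ∈ ℍ^{m×p}, U₂ ∈ ℍ^{n×q}, U₃ ∈ ℍ^{m×p}, the pair X = A₁⁺C₁ − A₁⁺U₁B₁ + L_{A₁}U₂ and Y = R_{A₁}C₁B₁⁺ + A₁A₁⁺U₁ + U₃R_{B₁} satisfies A₁X + YB₁ = C₁; and (b) every pair (X, Y) with A₁X + YB₁ = C₁ is of this form for some choice of U₁, U₂, U₃. -/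
open Matrix

/-- General solution of the Sylvester equation `A₁ X + Y B₁ = C₁` over the quaternions:
(a) every matrix pair of the given form is a solution, and
(b) every solution is of this form. -/
theorem stmt9 {m n p q : ℕ}
    (A₁ : Matrix (Fin m) (Fin n) Hq) (B₁ : Matrix (Fin p) (Fin q) Hq)
    (C₁ : Matrix (Fin m) (Fin q) Hq)
    (A₁p : Matrix (Fin n) (Fin m) Hq) (B₁p : Matrix (Fin q) (Fin p) Hq)
    (hA₁ : IsMPInv A₁ A₁p) (hB₁ : IsMPInv B₁ B₁p)
    (hcons : (1 - A₁ * A₁p) * C₁ * (1 - B₁p * B₁) = 0) :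
    (∀ (U₁ : Matrix (Fin m) (Fin p) Hq) (U₂ : Matrix (Fin n) (Fin q) Hq)
        (U₃ : Matrix (Fin m) (Fin p) Hq),
        A₁ * (A₁p * C₁ - A₁p * U₁ * B₁ + (1 - A₁p * A₁) * U₂)
          + ((1 - A₁ * A₁p) * C₁ * B₁p + A₁ * A₁p * U₁ + U₃ * (1 - B₁ * B₁p)) * B₁ = C₁) ∧
    (∀ (X : Matrix (Fin n) (Fin q) Hq) (Y : Matrix (Fin m) (Fin p) Hq),
        A₁ * X + Y * B₁ = C₁ →
        ∃ (U₁ : Matrix (Fin m) (Fin p) Hq) (U₂ : Matrix (Fin n) (Fin q) Hq)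
          (U₃ : Matrix (Fin m) (Fin p) Hq),
          X = A₁p * C₁ - A₁p * U₁ * B₁ + (1 - A₁p * A₁) * U₂ ∧
          Y = (1 - A₁ * A₁p) * C₁ * B₁p + A₁ * A₁p * U₁ + U₃ * (1 - B₁ * B₁p)) := by
  obtain ⟨ha1, -, -, -⟩ := hA₁
  obtain ⟨hb1, -, -, -⟩ := hB₁
  have ha' : ∀ {k : ℕ} (Z : Matrix (Fin n) (Fin k) Hq),
      A₁ * (A₁p * (A₁ * Z)) = A₁ * Z := by
    intro k Z
    rw [← Matrix.mul_assoc, ← Matrix.mul_assoc, ha1]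
  have hb' : B₁ * (B₁p * B₁) = B₁ := by rw [← Matrix.mul_assoc, hb1]
  simp only [Matrix.sub_mul, Matrix.mul_sub, Matrix.mul_one, Matrix.one_mul,
    Matrix.mul_assoc] at hcons
  constructor
  · intro U₁ U₂ U₃
    simp only [Matrix.sub_mul, Matrix.mul_sub, Matrix.mul_add, Matrix.add_mul,
      Matrix.mul_one, Matrix.one_mul, Matrix.mul_assoc, ha', hb']
    rw [eq_comm, ← sub_eq_zero, ← hcons]
    abel
  · intro X Y hXY
    refine ⟨Y, X, (1 - A₁ * A₁p) * Y, ?_, ?_⟩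
    · rw [← hXY]
      simp only [Matrix.sub_mul, Matrix.mul_sub, Matrix.mul_add, Matrix.add_mul,
        Matrix.mul_one, Matrix.one_mul, Matrix.mul_assoc, ha', hb']
      abel
    · rw [← hXY]
      simp only [Matrix.sub_mul, Matrix.mul_sub, Matrix.mul_add, Matrix.add_mul,
        Matrix.mul_one, Matrix.one_mul, Matrix.mul_assoc, ha', hb']
      abel
end

section
/- Let A₁₁ ∈ ℍ^{m₁×n}, A₂₂ ∈ ℍ^{m₂×n}, B₁₁ ∈ ℍ^{p×q₁}, B₂₂ ∈ ℍ^{p×q₂}, C₁ ∈ ℍ^{m₁×q₁}, C₂ ∈ ℍ^{m₂×q₂} be quaternion matrices with given Moore–Penrose inverses of A₁₁, A₂₂, B₁₁, B₂₂, of A₁ := A₂₂L_{A₁₁}, and of T := R_{B₁₁}B₂₂; put F := B₂₂L_T and G := R_{A₁}A₂₂. Then there exists X ∈ ℍ^{n×p} with A₁₁XB₁₁ = C₁ and A₂₂XB₂₂ = C₂ if and only if A₁₁A₁₁⁺C₁B₁₁⁺B₁₁ = C₁, A₂₂A₂₂⁺C₂B₂₂⁺B₂₂ = C₂ and G(A₂₂⁺C₂B₂₂⁺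 − A₁₁⁺C₁B₁₁⁺)F = 0. -/
open Matrix

private lemma lc2 {a b c d e : Type*} [Fintype b] [Fintype c] [Fintype d]
    {X : Matrix a b Hq} {Y : Matrix b c Hq} {Z : Matrix c d Hq} {W : Matrix a d Hq}
    (h : X * Y * Z = W) (M : Matrix d e Hq) :
    X * (Y * (Z * M)) = W * M := by
  rw [← Matrix.mul_assoc, ← Matrix.mul_assoc, h]

/-- Lemma 2.3 (Wang): solvability conditions for the system
`A₁₁ X B₁₁ = C₁`, `A₂₂ X B₂₂ = C₂` via `G`, `F`. -/
theorem stmt10 {m₁ m₂ n p q₁ q₂ : ℕ}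
    (A₁₁ : Matrix (Fin m₁) (Fin n) Hq) (A₂₂ : Matrix (Fin m₂) (Fin n) Hq)
    (B₁₁ : Matrix (Fin p) (Fin q₁) Hq) (B₂₂ : Matrix (Fin p) (Fin q₂) Hq)
    (C₁ : Matrix (Fin m₁) (Fin q₁) Hq) (C₂ : Matrix (Fin m₂) (Fin q₂) Hq)
    (A₁₁p : Matrix (Fin n) (Fin m₁) Hq) (A₂₂p : Matrix (Fin n) (Fin m₂) Hq)
    (B₁₁p : Matrix (Fin q₁) (Fin p) Hq) (B₂₂p : Matrix (Fin q₂) (Fin p) Hq)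
    (hA₁₁ : IsMPInv A₁₁ A₁₁p) (hA₂₂ : IsMPInv A₂₂ A₂₂p)
    (hB₁₁ : IsMPInv B₁₁ B₁₁p) (hB₂₂ : IsMPInv B₂₂ B₂₂p)
    (A₁ : Matrix (Fin m₂) (Fin n) Hq) (hA₁ : A₁ = A₂₂ * (1 - A₁₁p * A₁₁))
    (A₁p : Matrix (Fin n) (Fin m₂) Hq) (hA₁p : IsMPInv A₁ A₁p)
    (T : Matrix (Fin p) (Fin q₂) Hq) (hT : T = (1 - B₁₁ * B₁₁p) * B₂₂)
    (Tp : Matrix (Fin q₂) (Fin p) Hq) (hTp : IsMPInv T Tp)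
    (F : Matrix (Fin p) (Fin q₂) Hq) (hF : F = B₂₂ * (1 - Tp * T))
    (G : Matrix (Fin m₂) (Fin n) Hq) (hG : G = (1 - A₁ * A₁p) * A₂₂) :
    (∃ X : Matrix (Fin n) (Fin p) Hq, A₁₁ * X * B₁₁ = C₁ ∧ A₂₂ * X * B₂₂ = C₂) ↔
      (A₁₁ * A₁₁p * C₁ * B₁₁p * B₁₁ = C₁ ∧
       A₂₂ * A₂₂p * C₂ * B₂₂p * B₂₂ = C₂ ∧
       G * (A₂₂p * C₂ * B₂₂p - A₁₁p * C₁ * B₁₁p) * F = 0) := by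
  obtain ⟨hA₁₁1, -, -, -⟩ := hA₁₁
  obtain ⟨hA₂₂1, -, -, -⟩ := hA₂₂
  obtain ⟨hB₁₁1, -, -, -⟩ := hB₁₁
  obtain ⟨hB₂₂1, -, -, -⟩ := hB₂₂
  obtain ⟨hA₁1, -, -, -⟩ := hA₁p
  obtain ⟨hT1, -, -, -⟩ := hTp
  have hA₁₁r : A₁₁ * (A₁₁p * A₁₁) = A₁₁ := by rw [← Matrix.mul_assoc]; exact hA₁₁1
  have hA₂₂r : A₂₂ * (A₂₂p * A₂₂) = A₂₂ := by rw [← Matrix.mul_assoc]; exact hA₂₂1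
  have hB₁₁r : B₁₁ * (B₁₁p * B₁₁) = B₁₁ := by rw [← Matrix.mul_assoc]; exact hB₁₁1
  have hB₂₂r : B₂₂ * (B₂₂p * B₂₂) = B₂₂ := by rw [← Matrix.mul_assoc]; exact hB₂₂1
  have hTr : T * (Tp * T) = T := by rw [← Matrix.mul_assoc]; exact hT1
  constructor
  · rintro ⟨X, hX1, hX2⟩
    have hGA2L : G * A₂₂p * A₂₂ = G := by
      rw [hG]; simp only [Matrix.mul_assoc, hA₂₂r]
    have hz : G * (1 - A₁₁p * A₁₁) = 0 := by
      rw [hG, Matrix.mul_assoc, ← hA₁, Matrix.sub_mul, Matrix.one_mul, hA₁1, sub_self]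
    have hGA1L : G * A₁₁p * A₁₁ = G := by
      rw [Matrix.mul_sub, Matrix.mul_one, sub_eq_zero] at hz
      rw [Matrix.mul_assoc]; exact hz.symm
    have hzF : (1 - B₁₁ * B₁₁p) * F = 0 := by
      rw [hF, ← Matrix.mul_assoc, ← hT, Matrix.mul_sub, Matrix.mul_one, hTr, sub_self]
    have hFB : B₁₁ * (B₁₁p * F) = F := by
      rw [Matrix.sub_mul, Matrix.one_mul, Matrix.mul_assoc, sub_eq_zero] at hzF
      exact hzF.symm
    have hFB2 : B₂₂ * (B₂₂p * F) = F := by rw [hF]; exact lc2 hB₂₂1 _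
    refine ⟨?_, ?_, ?_⟩
    · rw [← hX1]
      simp only [Matrix.mul_assoc]
      rw [hB₁₁r]
      exact lc2 hA₁₁1 _
    · rw [← hX2]
      simp only [Matrix.mul_assoc]
      rw [hB₂₂r]
      exact lc2 hA₂₂1 _
    · have e2 : G * (A₂₂p * (C₂ * (B₂₂p * F))) = G * (X * F) := by
        rw [← hX2]; simp only [Matrix.mul_assoc]; rw [hFB2]; exact lc2 hGA2L _
      have e1 : G * (A₁₁p * (C₁ * (B₁₁p * F))) = G * (X * F) := by
        rw [← hX1]; simp only [Matrix.mul_assoc]; rw [hFB]; exact lc2 hGA1L _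
      simp only [Matrix.mul_sub, Matrix.sub_mul, Matrix.mul_assoc]
      rw [e1, e2, sub_self]
  · rintro ⟨h1, h2, h3⟩
    simp only [Matrix.mul_assoc] at h1 h2
    have hC2l : A₂₂ * (A₂₂p * C₂) = C₂ := by
      conv_lhs => rw [← h2]
      rw [lc2 hA₂₂1, h2]
    have hC2r : C₂ * (B₂₂p * B₂₂) = C₂ := by
      conv_lhs => rw [← h2]
      simp only [Matrix.mul_assoc]
      rw [hB₂₂r, h2]
    set E : Matrix (Fin m₂) (Fin q₂) Hq := A₂₂ * (A₁₁p * (C₁ * (B₁₁p * B₂₂))) with hE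
    set D : Matrix (Fin m₂) (Fin q₂) Hq := C₂ - E with hD
    set U : Matrix (Fin m₂) (Fin q₂) Hq := D - A₁ * (A₁p * D) with hU
    have hEr : E * (B₂₂p * B₂₂) = E := by
      rw [hE]; simp only [Matrix.mul_assoc]; rw [hB₂₂r]
    have hDr : D * (B₂₂p * B₂₂) = D := by
      rw [hD, Matrix.sub_mul, hC2r, hEr]
    have hDl : A₂₂ * (A₂₂p * D) = D := by
      rw [hD]; simp only [Matrix.mul_sub]; rw [hC2l, hE, lc2 hA₂₂1]
    have hA₂₂A₁L : A₂₂ * A₂₂p * A₁ = A₁ := by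
      rw [Matrix.mul_assoc, hA₁]; exact lc2 hA₂₂1 _
    have core : (1 - A₁ * A₁p) * A₂₂ * (A₂₂p * C₂ * B₂₂p - A₁₁p * C₁ * B₁₁p) * B₂₂ = U := by
      rw [hU, hD, hE]
      simp only [Matrix.sub_mul, Matrix.mul_sub, Matrix.one_mul, Matrix.mul_assoc]
      rw [h2]
      abel
    have expand : (1 - A₁ * A₁p) * A₂₂ * (A₂₂p * C₂ * B₂₂p - A₁₁p * C₁ * B₁₁p) *
        (B₂₂ * (1 - Tp * T)) = U * (1 - Tp * T) := by
      rw [← Matrix.mul_assoc, core]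
    have key : U * (1 - Tp * T) = 0 := by
      rw [hG, hF] at h3
      rw [expand] at h3
      exact h3
    have k1 : U * (Tp * T) = U := by
      rw [Matrix.mul_sub, Matrix.mul_one, sub_eq_zero] at key
      exact key.symm
    have k2 : A₂₂ * (A₂₂p * U) = U := by
      rw [hU]; simp only [Matrix.mul_sub]; rw [hDl, lc2 hA₂₂A₁L]
    have z1 : A₁₁ * (1 - A₁₁p * A₁₁) = 0 := by
      rw [Matrix.mul_sub, Matrix.mul_one, ← Matrix.mul_assoc, hA₁₁1, sub_self]
    have z2 : (1 - B₁₁ * B₁₁p) * B₁₁ = 0 := by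
      rw [Matrix.sub_mul, Matrix.one_mul, hB₁₁1, sub_self]
    refine ⟨A₁₁p * (C₁ * B₁₁p) + (1 - A₁₁p * A₁₁) * (A₁p * (D * B₂₂p)) +
        A₂₂p * (U * (Tp * (1 - B₁₁ * B₁₁p))), ?_, ?_⟩
    · have tA1 : A₁₁ * (A₁₁p * (C₁ * B₁₁p)) * B₁₁ = C₁ := by
        simp only [Matrix.mul_assoc]; exact h1
      have tA2 : A₁₁ * ((1 - A₁₁p * A₁₁) * (A₁p * (D * B₂₂p))) * B₁₁ = 0 := by
        rw [← Matrix.mul_assoc A₁₁, z1, Matrix.zero_mul, Matrix.zero_mul]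
      have tA3 : A₁₁ * (A₂₂p * (U * (Tp * (1 - B₁₁ * B₁₁p)))) * B₁₁ = 0 := by
        simp only [Matrix.mul_assoc]
        rw [z2]
        simp only [Matrix.mul_zero]
      simp only [Matrix.mul_add, Matrix.add_mul]
      rw [tA1, tA2, tA3, add_zero, add_zero]
    · have tB1 : A₂₂ * (A₁₁p * (C₁ * B₁₁p)) * B₂₂ = E := by
        rw [hE]; simp only [Matrix.mul_assoc]
      have tB2 : A₂₂ * ((1 - A₁₁p * A₁₁) * (A₁p * (D * B₂₂p))) * B₂₂ = A₁ * (A₁p * D) := by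
        rw [← Matrix.mul_assoc A₂₂, ← hA₁]
        simp only [Matrix.mul_assoc]
        rw [hDr]
      have tB3 : A₂₂ * (A₂₂p * (U * (Tp * (1 - B₁₁ * B₁₁p)))) * B₂₂ = U := by
        simp only [Matrix.mul_assoc]
        rw [← hT, k1, k2]
      simp only [Matrix.mul_add, Matrix.add_mul]
      rw [tB1, tB2, tB3, hU, hD]
      abel
end

section
/- Let A₁ ∈ ℍ^{m×n}, B₁ ∈ ℍ^{p×q}, C₃ ∈ ℍ^{m×n₃}, D₃ ∈ ℍ^{p₃×q}, C₄ ∈ ℍ^{m×n₄}, D₄ ∈ ℍ^{p₄×q}, E₁ ∈ ℍ^{m×q} be quaternion matrices. Put A = R_{A₁}C₃, B = D₃L_{B₁}, C = R_{A₁}C₄, D = D₄L_{B₁}, E = R_{A₁}E₁L_{B₁}, M = R_A C, N = DL_B, and assume Moore–Penrose inverses of A₁, B₁, A, B, C, D, M, N are given. Then the equation A₁X₁ + X₂B₁ + C₃X₃D₃ + C₄X₄D₄ = E₁ has a solution (X₁, X₂, X₃, X₄) if and only if R_M R_A E = 0, E L_B L_N = 0, R_A E L_D = 0 and R_C E L_B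 = 0. -/
open Matrix

set_option linter.unusedSectionVars false

section helpers
variable {k l : Type*} [Fintype k] [Fintype l]

lemma mul_reassoc {X : Matrix k l Hq} {o : Type*} [Fintype o] {Y : Matrix l o Hq}
    {Z : Matrix k o Hq} (h : X * Y = Z) {o' : Type*} [Fintype o'] (W : Matrix o o' Hq) :
    X * (Y * W) = Z * W := by rw [← Matrix.mul_assoc, h]

lemma mp_applied {A : Matrix k l Hq} {Ap : Matrix l k Hq} (h : IsMPInv A Ap)
    {o : Type*} [Fintype o] (W : Matrix l o Hq) : A * (Ap * (A * W)) = A * W := by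
  rw [← Matrix.mul_assoc, ← Matrix.mul_assoc, h.1]

/-- If `P` is Hermitian and `P * A = A`, then `Ap * P = Ap`. -/
lemma mp_proj_right {A : Matrix k l Hq} {Ap : Matrix l k Hq} (h : IsMPInv A Ap)
    {P : Matrix k k Hq} (hP : Pᴴ = P) (hPA : P * A = A) : Ap * P = Ap := by
  have h3 : Aᴴ * P = Aᴴ := by rw [← hP, ← Matrix.conjTranspose_mul, hPA]
  calc Ap * P = Ap * ((A * Ap)ᴴ * P) := by
        rw [h.2.2.1, ← Matrix.mul_assoc, ← Matrix.mul_assoc, h.2.1]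
    _ = Ap * (Apᴴ * (Aᴴ * P)) := by rw [Matrix.conjTranspose_mul, Matrix.mul_assoc]
    _ = Ap * (Apᴴ * Aᴴ) := by rw [h3]
    _ = Ap := by rw [← Matrix.conjTranspose_mul, h.2.2.1, ← Matrix.mul_assoc, h.2.1]

/-- If `P` is Hermitian and `A * P = A`, then `P * Ap = Ap`. -/
lemma mp_proj_left {A : Matrix k l Hq} {Ap : Matrix l k Hq} (h : IsMPInv A Ap)
    {P : Matrix l l Hq} (hP : Pᴴ = P) (hAP : A * P = A) : P * Ap = Ap := by
  have h3 : P * Aᴴ = Aᴴ := by rw [← hP, ← Matrix.conjTranspose_mul, hAP]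
  calc P * Ap = P * ((Ap * A)ᴴ * Ap) := by rw [h.2.2.2, h.2.1]
    _ = P * Aᴴ * (Apᴴ * Ap) := by
        rw [Matrix.conjTranspose_mul, Matrix.mul_assoc, Matrix.mul_assoc]
    _ = Aᴴ * (Apᴴ * Ap) := by rw [h3]
    _ = (Ap * A)ᴴ * Ap := by rw [Matrix.conjTranspose_mul, Matrix.mul_assoc]
    _ = Ap := by rw [h.2.2.2, h.2.1]

end helpers

set_option maxHeartbeats 1000000 in
/-- Lemma 2.5 (Wang–He): solvability conditions for
`A₁X₁ + X₂B₁ + C₃X₃D₃ + C₄X₄D₄ = E₁`. -/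
theorem stmt11 {m n p q n₃ p₃ n₄ p₄ : ℕ}
    (A₁ : Matrix (Fin m) (Fin n) Hq) (B₁ : Matrix (Fin p) (Fin q) Hq)
    (C₃ : Matrix (Fin m) (Fin n₃) Hq) (D₃ : Matrix (Fin p₃) (Fin q) Hq)
    (C₄ : Matrix (Fin m) (Fin n₄) Hq) (D₄ : Matrix (Fin p₄) (Fin q) Hq)
    (E₁ : Matrix (Fin m) (Fin q) Hq)
    (A₁p : Matrix (Fin n) (Fin m) Hq) (B₁p : Matrix (Fin q) (Fin p) Hq)
    (hA₁ : IsMPInv A₁ A₁p) (hB₁ : IsMPInv B₁ B₁p)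
    (A : Matrix (Fin m) (Fin n₃) Hq) (hA : A = (1 - A₁ * A₁p) * C₃)
    (B : Matrix (Fin p₃) (Fin q) Hq) (hB : B = D₃ * (1 - B₁p * B₁))
    (C : Matrix (Fin m) (Fin n₄) Hq) (hC : C = (1 - A₁ * A₁p) * C₄)
    (D : Matrix (Fin p₄) (Fin q) Hq) (hD : D = D₄ * (1 - B₁p * B₁))
    (E : Matrix (Fin m) (Fin q) Hq) (hE : E = (1 - A₁ * A₁p) * E₁ * (1 - B₁p * B₁))
    (Ap : Matrix (Fin n₃) (Fin m) Hq) (hAp : IsMPInv A Ap)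
    (Bp : Matrix (Fin q) (Fin p₃) Hq) (hBp : IsMPInv B Bp)
    (Cp : Matrix (Fin n₄) (Fin m) Hq) (hCp : IsMPInv C Cp)
    (Dp : Matrix (Fin q) (Fin p₄) Hq) (hDp : IsMPInv D Dp)
    (M : Matrix (Fin m) (Fin n₄) Hq) (hM : M = (1 - A * Ap) * C)
    (N : Matrix (Fin p₄) (Fin q) Hq) (hN : N = D * (1 - Bp * B))
    (Mp : Matrix (Fin n₄) (Fin m) Hq) (hMp : IsMPInv M Mp)
    (Np : Matrix (Fin q) (Fin p₄) Hq) (hNp : IsMPInv N Np) :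
    (∃ (X₁ : Matrix (Fin n) (Fin q) Hq) (X₂ : Matrix (Fin m) (Fin p) Hq)
        (X₃ : Matrix (Fin n₃) (Fin p₃) Hq) (X₄ : Matrix (Fin n₄) (Fin p₄) Hq),
        A₁ * X₁ + X₂ * B₁ + C₃ * X₃ * D₃ + C₄ * X₄ * D₄ = E₁) ↔
      ((1 - M * Mp) * ((1 - A * Ap) * E) = 0 ∧
       E * (1 - Bp * B) * (1 - Np * N) = 0 ∧
       (1 - A * Ap) * E * (1 - Dp * D) = 0 ∧
       (1 - C * Cp) * E * (1 - Bp * B) = 0) := by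
  set RA1 := 1 - A₁ * A₁p with hRA1def
  set LB1 := 1 - B₁p * B₁ with hLB1def
  set RA := 1 - A * Ap with hRAdef
  set LB := 1 - Bp * B with hLBdef
  -- basic annihilation facts
  have hRA1A1 : RA1 * A₁ = 0 := by
    rw [hRA1def, Matrix.sub_mul, Matrix.one_mul, hA₁.1, sub_self]
  have hB1LB1 : B₁ * LB1 = 0 := by
    rw [hLB1def, Matrix.mul_sub, Matrix.mul_one, ← Matrix.mul_assoc, hB₁.1, sub_self]
  have hRAA : RA * A = 0 := by
    rw [hRAdef, Matrix.sub_mul, Matrix.one_mul, hAp.1, sub_self]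
  have hBLB : B * LB = 0 := by
    rw [hLBdef, Matrix.mul_sub, Matrix.mul_one, ← Matrix.mul_assoc, hBp.1, sub_self]
  have hDLD : D * (1 - Dp * D) = 0 := by
    rw [Matrix.mul_sub, Matrix.mul_one, ← Matrix.mul_assoc, hDp.1, sub_self]
  have hRCC : (1 - C * Cp) * C = 0 := by
    rw [Matrix.sub_mul, Matrix.one_mul, hCp.1, sub_self]
  have hRMM : (1 - M * Mp) * M = 0 := by
    rw [Matrix.sub_mul, Matrix.one_mul, hMp.1, sub_self]
  have hNLN : N * (1 - Np * N) = 0 := by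
    rw [Matrix.mul_sub, Matrix.mul_one, ← Matrix.mul_assoc, hNp.1, sub_self]
  -- idempotency and Hermitian facts
  have hRAidem : RA * RA = RA := by
    rw [hRAdef, Matrix.mul_sub, Matrix.mul_one, Matrix.sub_mul, Matrix.one_mul,
      ← Matrix.mul_assoc, hAp.1, sub_self, sub_zero]
  have hLBidem : LB * LB = LB := by
    rw [hLBdef, Matrix.sub_mul, Matrix.one_mul, Matrix.mul_sub, Matrix.mul_one,
      ← Matrix.mul_assoc, hBp.2.1, sub_self, sub_zero]
  have hRAH : RAᴴ = RA := by
    rw [hRAdef, Matrix.conjTranspose_sub, Matrix.conjTranspose_one, hAp.2.2.1]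
  have hLBH : LBᴴ = LB := by
    rw [hLBdef, Matrix.conjTranspose_sub, Matrix.conjTranspose_one, hBp.2.2.2]
  have hRAM : RA * M = M := by rw [hM, ← Matrix.mul_assoc, hRAidem]
  have hMpRA : Mp * RA = Mp := mp_proj_right hMp hRAH hRAM
  have hNLB : N * LB = N := by rw [hN, Matrix.mul_assoc, hLBidem]
  have hLBNp : LB * Np = Np := mp_proj_left hNp hLBH hNLB
  constructor
  · rintro ⟨X₁, X₂, X₃, X₄, heq⟩
    have hE' : E = A * (X₃ * B) + C * (X₄ * D) := by
      rw [hE, ← heq, hA, hB, hC, hD]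
      simp only [Matrix.mul_add, Matrix.add_mul, Matrix.mul_assoc, mul_reassoc hRA1A1,
        hB1LB1, Matrix.zero_mul, Matrix.mul_zero, zero_add, add_zero]
    refine ⟨?_, ?_, ?_, ?_⟩
    · rw [hE']
      simp only [Matrix.mul_add, mul_reassoc hRAA, Matrix.zero_mul, zero_add,
        mul_reassoc hM.symm, mul_reassoc hRMM, Matrix.mul_zero, add_zero]
    · rw [hE']
      simp only [Matrix.add_mul, Matrix.mul_assoc, mul_reassoc hBLB, Matrix.zero_mul,
        mul_reassoc hN.symm, hNLN, Matrix.mul_zero, zero_add, add_zero]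
    · rw [hE']
      simp only [Matrix.mul_add, Matrix.add_mul, Matrix.mul_assoc, mul_reassoc hRAA,
        Matrix.zero_mul, hDLD, Matrix.mul_zero, zero_add, add_zero]
    · rw [hE']
      simp only [Matrix.mul_add, Matrix.add_mul, Matrix.mul_assoc, hBLB, Matrix.mul_zero,
        mul_reassoc hRCC, Matrix.zero_mul, zero_add, add_zero]
  · rintro ⟨c1, c2, c3, c4⟩
    -- normalize the four conditions
    have a1 : M * (Mp * (RA * E)) = RA * E := by
      rw [Matrix.sub_mul, Matrix.one_mul, sub_eq_zero, Matrix.mul_assoc] at c1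
      exact c1.symm
    have b1' : RA * (E * (Dp * D)) = RA * E := by
      rw [Matrix.mul_sub, Matrix.mul_one, sub_eq_zero] at c3
      simp only [Matrix.mul_assoc] at c3
      exact c3.symm
    have cc' : E * (LB * (Np * N)) = E * LB := by
      rw [Matrix.mul_sub, Matrix.mul_one, sub_eq_zero] at c2
      simp only [Matrix.mul_assoc] at c2
      exact c2.symm
    have d1' : C * (Cp * (E * LB)) = E * LB := by
      rw [Matrix.mul_assoc, Matrix.sub_mul, Matrix.one_mul, sub_eq_zero] at c4
      simp only [Matrix.mul_assoc] at c4
      exact c4.symm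
    have b2' : RA * (E * (Dp * N)) = RA * (E * LB) := by
      have hb := congrArg (fun Z => Z * LB) b1'
      simp only [Matrix.mul_assoc] at hb
      rw [hN]
      exact hb
    have b3 : Mp * (E * (Dp * N)) = Mp * (E * LB) := by
      have hb := congrArg (fun Z => Mp * Z) b2'
      simp only [mul_reassoc hMpRA] at hb
      exact hb
    have e3 : M * (Cp * (E * LB)) = RA * (E * LB) := by
      rw [hM, Matrix.mul_assoc, d1']
    -- the particular solution of A X₃ B + C X₄ D = E
    obtain ⟨Y, hYdef⟩ : ∃ Y : Matrix (Fin n₄) (Fin p₄) Hq,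
        Y = Mp * (RA * E) * Dp + (1 - Mp * M) * (Cp * (E * LB * Np)) := ⟨_, rfl⟩
    have claim1 : M * Y * D = RA * E := by
      rw [hYdef]
      simp only [Matrix.mul_add, Matrix.add_mul, Matrix.mul_sub, Matrix.sub_mul,
        Matrix.one_mul, Matrix.mul_one, Matrix.mul_assoc, mp_applied hMp, b1', a1]
      abel
    have claim2 : C * Y * N = E * LB := by
      rw [hYdef]
      simp only [Matrix.mul_add, Matrix.add_mul, Matrix.mul_sub, Matrix.sub_mul,
        Matrix.one_mul, Matrix.mul_one, Matrix.mul_assoc, b3, cc', d1', e3,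
        mul_reassoc hMpRA]
      abel
    have claim1' : RA * (C * (Y * D)) = RA * E := by
      rw [← claim1, hM]
      simp only [Matrix.mul_assoc]
    have claim2' : C * (Y * (D * LB)) = E * LB := by
      rw [← hN, ← Matrix.mul_assoc]
      exact claim2
    obtain ⟨X3, hX3def⟩ : ∃ X3 : Matrix (Fin n₃) (Fin p₃) Hq,
        X3 = Ap * ((E - C * (Y * D)) * Bp) := ⟨_, rfl⟩
    have s1 : A * (Ap * (E - C * (Y * D))) = E - C * (Y * D) := by
      have h2 : RA * (E - C * (Y * D)) = 0 := by
        rw [Matrix.mul_sub, claim1', sub_self]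
      rw [hRAdef, Matrix.sub_mul, Matrix.one_mul, sub_eq_zero, Matrix.mul_assoc] at h2
      exact h2.symm
    have s2 : (E - C * (Y * D)) * (Bp * B) = E - C * (Y * D) := by
      have h3 : (E - C * (Y * D)) * LB = 0 := by
        rw [Matrix.sub_mul, Matrix.mul_assoc, Matrix.mul_assoc, claim2', sub_self]
      rw [hLBdef, Matrix.mul_sub, Matrix.mul_one, sub_eq_zero] at h3
      exact h3.symm
    have hfinal : A * X3 * B + C * Y * D = E := by
      rw [hX3def]
      simp only [Matrix.mul_assoc]
      rw [s2, s1]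
      abel
    obtain ⟨G, hGdef⟩ : ∃ G : Matrix (Fin m) (Fin q) Hq,
        G = E₁ - C₃ * X3 * D₃ - C₄ * Y * D₄ := ⟨_, rfl⟩
    have hG0 : RA1 * G * LB1 = 0 := by
      rw [hGdef]
      have h := hfinal
      rw [hA, hB, hC, hD, hE] at h
      simp only [Matrix.mul_assoc] at h
      simp only [Matrix.sub_mul, Matrix.mul_sub, Matrix.mul_assoc]
      rw [← h]
      abel
    have key : G = A₁ * (A₁p * G) + RA1 * G * B₁p * B₁ := by
      have h0 := hG0
      rw [hRA1def, hLB1def] at h0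
      rw [hRA1def]
      simp only [Matrix.sub_mul, Matrix.mul_sub, Matrix.one_mul, Matrix.mul_one,
        Matrix.mul_assoc] at h0 ⊢
      rw [← sub_eq_zero, ← h0]
      abel
    refine ⟨A₁p * G, RA1 * G * B₁p, X3, Y, ?_⟩
    have hsplit : C₃ * X3 * D₃ + C₄ * Y * D₄ = E₁ - G := by rw [hGdef]; abel
    calc A₁ * (A₁p * G) + RA1 * G * B₁p * B₁ + C₃ * X3 * D₃ + C₄ * Y * D₄
        = (A₁ * (A₁p * G) + RA1 * G * B₁p * B₁) + (E₁ - G) := by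
          rw [add_assoc, hsplit]
      _ = G + (E₁ - G) := by rw [← key]
      _ = E₁ := by abel
end

section
/- Let η ∈ {i, j, k} ⊆ ℍ and let A₁ ∈ ℍ^{p×a}, A₂ ∈ ℍ^{p×a₂}, A₃ ∈ ℍ^{p×a₃}, A₄ ∈ ℍ^{p×a₄}, B ∈ ℍ^{p×p} be quaternion matrices with B = B^{η*}. With the derived matrices of the context (A₁₁ = R_{A₁}A₂, A₂₂ = R_{A₁}A₃, A₃₃ = R_{A₁}A₄, M₁ = R_{A₁₁}A₂₂, T₁ = R_{A₁}B(R_{A₁})^{η*}, C = R_{M₁}R_{A₁₁}, C₁ = CA₃₃, C₂ = R_{A₁₁}A₃₃, C₃ = R_{A₂₂}A₃₃, C₄ = A₃₃, E₁ = CT₁, E₂ = R_{A₁₁}T₁(R_{A₂₂})^{η*}, E₃ = R_{A₂₂}T₁(R_{A₁₁})^{η*}, E₄ = T₁C^{η*}, C₁₁ = (L_{C₂}, L_{C₄}), C₂₂ = L_{C₁}, C₃₃ = L_{C₃}, E₁₁ = R_{C₁₁}C₂₂, E₂₂ = R_{C₁₁}C₃₃, F₁ = C₁⁺E₁(C₄^{η*})⁺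 + L_{C₁}C₂⁺E₂(C₃^{η*})⁺, F₂ = C₃⁺E₃(C₂^{η*})⁺ + L_{C₃}C₄⁺E₄(C₁^{η*})⁺, F = F₂ − F₁, E = R_{C₁₁}F(R_{C₁₁})^{η*}), the equation A₁X₁ + (A₁X₁)^{η*} + A₂Y₁A₂^{η*} + A₃Y₂A₃^{η*} + A₄Y₃A₄^{η*} = B has a solution (X₁, Y₁, Y₂, Y₃) with Y₁, Y₂, Y₃ η-Hermitian if and only if R_{Cᵢ}Eᵢ = 0 for all i = 1,2,3,4 and R_{E₂₂}E(R_{E₂₂})^{η*} = 0. -/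
open Matrix

/-- The quaternion `i`. -/
def qi : Hq := ⟨0, 1, 0, 0⟩
/-- The quaternion `j`. -/
def qj : Hq := ⟨0, 0, 1, 0⟩
/-- The quaternion `k`. -/
def qk : Hq := ⟨0, 0, 0, 1⟩

/-- The η-conjugate transpose `A^{η*} = -η Aᴴ η`:
its `(s, t)` entry is `-η * conj (A t s) * η`. -/
noncomputable def etaCT {m n : Type*} (η : Hq) (A : Matrix m n Hq) : Matrix n m Hq :=
  Matrix.of fun s t => -η * star (A t s) * η

/-!
The unknowns are eliminated one at a time. Since `R_{A₁} A₁ = 0`, the equation is solvable in `X₁`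
iff `R_{A₁} (B - Σ AᵢYᵢAᵢ^{η*}) R_{A₁}^{η*} = 0`, i.e. iff
`A₁₁Y₁A₁₁^{η*} + A₂₂Y₂A₂₂^{η*} + A₃₃Y₃A₃₃^{η*} = T₁`. For fixed `Y₃`, the two-term criterion (with
`M₁ = R_{A₁₁}A₂₂`) turns the existence of `Y₁, Y₂` into the pair `C₁Y₃C₄^{η*} = E₁`,
`C₂Y₃C₃^{η*} = E₂`. As `E₃ = E₂^{η*}` and `E₄ = E₁^{η*}`, symmetrization shows that this pair has
an η-Hermitian solution iff the four equations `CᵢYCⱼ^{η*} = Eᵢ`, `(i, j) = (1,4), (2,3), (3,2),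
(4,1)`, have a common solution.

Under the range conditions `R_{Cᵢ}Eᵢ = 0` these read `PᵢYQⱼ = Xᵢ` with `Pᵢ = Cᵢ⁺Cᵢ`,
`Qᵢ = Pᵢ^{η*}` and `Xᵢ = Cᵢ⁺EᵢCⱼ⁺^{η*}`. The projections form a diamond `P₁ ≤ P₂, P₃ ≤ P₄` (so
`R_{C₁₁} = P₂`), and the targets agree wherever two corners overlap. Then `F₁` solves the first two
corner equations and `F₂` the last two, and a common solution exists iff `E = P₂(F₂ - F₁)Q₂` has
the form `U E₂₂^{η*} + E₂₂V` with `E₂₂ = P₂(1 - P₃)`, which is `R_{E₂₂} E R_{E₂₂}^{η*} = 0`.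
-/

lemma Quaternion.star_eq_neg_of_mul_self_eq_neg_one {η : Hq} (h : η * η = -1) :
    star η = -η := by
  have hre := congrArg (·.re) h
  have hi := congrArg (·.imI) h
  have hj := congrArg (·.imJ) h
  have hk := congrArg (·.imK) h
  simp only [Quaternion.re_mul, Quaternion.imI_mul, Quaternion.imJ_mul, Quaternion.imK_mul,
    Quaternion.re_neg, Quaternion.imI_neg, Quaternion.imJ_neg, Quaternion.imK_neg,
    Quaternion.re_one, Quaternion.imI_one, Quaternion.imJ_one, Quaternion.imK_one] at hre hi hj hk
  have h0 : η.re = 0 := by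
    by_contra hne
    have hv : η.imI = 0 ∧ η.imJ = 0 ∧ η.imK = 0 :=
      ⟨(mul_eq_zero.mp (by linarith : η.re * η.imI = 0)).resolve_left hne,
        (mul_eq_zero.mp (by linarith : η.re * η.imJ = 0)).resolve_left hne,
        (mul_eq_zero.mp (by linarith : η.re * η.imK = 0)).resolve_left hne⟩
    rw [hv.1, hv.2.1, hv.2.2] at hre
    nlinarith [sq_nonneg η.re]
  ext <;> simp [h0]

lemma mul_self_eq_neg_one_of_eq_qi_or {η : Hq} (hη : η = qi ∨ η = qj ∨ η = qk) :
    η * η = -1 := by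
  rcases hη with h | h | h <;> subst h <;> ext <;>
    simp [Quaternion.re_mul, Quaternion.imI_mul, Quaternion.imJ_mul, Quaternion.imK_mul] <;>
    simp [qi, qj, qk, Quaternion.re_one, Quaternion.imI_one, Quaternion.imJ_one,
      Quaternion.imK_one]

lemma IsSelfAdjoint.mul_eq_of_mul_eq_swap {R : Type*} [Mul R] [StarMul R] {a b c : R}
    (ha : IsSelfAdjoint a) (hb : IsSelfAdjoint b) (hc : IsSelfAdjoint c) (h : a * b = c) :
    b * a = c := by
  simpa only [star_mul, ha.star_eq, hb.star_eq, hc.star_eq] using congrArg star h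

lemma mul_mul_of_mul_eq {l m n o : Type*} [Fintype m] [Fintype n] {A : Matrix l m Hq}
    {B : Matrix m n Hq} {C : Matrix l n Hq} (h : A * B = C) (X : Matrix n o Hq) :
    A * (B * X) = C * X := by
  rw [← Matrix.mul_assoc, h]

lemma mul_mul_eq_mul_one_sub_mul {n : Type*} [Fintype n] [DecidableEq n]
    {A B Λ Q : Matrix n n Hq} (h : B * Λ * Q = 0) : A * Λ * Q = A * (1 - B) * (Λ * Q) := by
  rw [Matrix.mul_sub, Matrix.mul_one, Matrix.sub_mul, Matrix.mul_assoc A B, ← Matrix.mul_assoc B,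
    h, Matrix.mul_zero, sub_zero, Matrix.mul_assoc]

lemma mul_eq_self_of_one_sub_mul_eq_zero {m k : Type*} [Fintype m] [DecidableEq m]
    {P : Matrix m m Hq} {E : Matrix m k Hq} (h : (1 - P) * E = 0) : P * E = E := by
  rwa [Matrix.sub_mul, Matrix.one_mul, sub_eq_zero, eq_comm] at h

section EtaConjTranspose

variable {η : Hq} {l m n : Type*}

lemma etaCT_add (A B : Matrix m n Hq) : etaCT η (A + B) = etaCT η A + etaCT η B :=
  Matrix.ext fun s t => by
    simp only [etaCT, of_apply, Matrix.add_apply, star_add]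
    noncomm_ring

lemma etaCT_sub (A B : Matrix m n Hq) : etaCT η (A - B) = etaCT η A - etaCT η B :=
  Matrix.ext fun s t => by
    simp only [etaCT, of_apply, Matrix.sub_apply, star_sub]
    noncomm_ring

lemma etaCT_zero : etaCT η (0 : Matrix m n Hq) = 0 :=
  Matrix.ext fun s t => by simp [etaCT]

lemma etaCT_smul (c : ℝ) (A : Matrix m n Hq) : etaCT η (c • A) = c • etaCT η A :=
  Matrix.ext fun s t => by
    simp only [etaCT, of_apply, Matrix.smul_apply, Quaternion.star_smul, mul_smul_comm,
      smul_mul_assoc]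

lemma etaCT_one [DecidableEq n] (hη : η * η = -1) : etaCT η (1 : Matrix n n Hq) = 1 :=
  Matrix.ext fun s t => by
    by_cases h : s = t
    · subst h
      simp [etaCT, hη]
    · simp [etaCT, one_apply, h, Ne.symm h]

lemma etaCT_mul [Fintype n] (hη : η * η = -1) (A : Matrix l n Hq) (B : Matrix n m Hq) :
    etaCT η (A * B) = etaCT η B * etaCT η A :=
  Matrix.ext fun s t => by
    simp only [etaCT, of_apply, mul_apply, star_sum, star_mul, Finset.mul_sum, Finset.sum_mul]
    refine Finset.sum_congr rfl fun u _ => ?_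
    calc -η * (star (B u s) * star (A t u)) * η
        = -η * star (B u s) * (-(η * η)) * star (A t u) * η := by rw [hη]; noncomm_ring
      _ = -η * star (B u s) * η * (-η * star (A t u) * η) := by noncomm_ring

lemma etaCT_etaCT (hη : η * η = -1) (A : Matrix m n Hq) : etaCT η (etaCT η A) = A :=
  Matrix.ext fun s t => by
    simp only [etaCT, of_apply, star_mul, star_neg, star_star,
      Quaternion.star_eq_neg_of_mul_self_eq_neg_one hη]
    calc -η * (-η * (A s t * - -η)) * η = (η * η) * A s t * (η * η) := by noncomm_ring
      _ = A s t := by rw [hη]; noncomm_ring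

lemma etaCT_mul_etaCT [Fintype m] (hη : η * η = -1) {A : Matrix m n Hq} {B : Matrix l m Hq}
    {C : Matrix l n Hq} (h : B * A = C) :
    etaCT η A * etaCT η B = etaCT η C := by
  rw [← etaCT_mul hη, h]

lemma etaCT_mul_etaCT_eq_of_one_sub_mul_eq_zero [Fintype m] [DecidableEq m] (hη : η * η = -1)
    {P : Matrix m m Hq} {E : Matrix m n Hq} (h : (1 - P) * E = 0) :
    etaCT η E * etaCT η P = etaCT η E := by
  rw [← etaCT_mul hη, mul_eq_self_of_one_sub_mul_eq_zero h]

end EtaConjTranspose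

namespace IsMPInv

variable {l m n : Type*} [Fintype m] [Fintype n] {A : Matrix m n Hq} {Ap : Matrix n m Hq}

lemma mul_inv_mul (h : IsMPInv A Ap) : A * (Ap * A) = A := by
  rw [← Matrix.mul_assoc, h.1]

lemma inv_mul_inv (h : IsMPInv A Ap) : Ap * (A * Ap) = Ap := by
  rw [← Matrix.mul_assoc, h.2.1]

lemma isStarProjection_mul_inv (h : IsMPInv A Ap) : IsStarProjection (A * Ap) :=
  ⟨by rw [IsIdempotentElem, Matrix.mul_assoc, h.inv_mul_inv], h.2.2.1⟩

lemma isStarProjection_inv_mul (h : IsMPInv A Ap) : IsStarProjection (Ap * A) :=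
  ⟨by rw [IsIdempotentElem, Matrix.mul_assoc, h.mul_inv_mul], h.2.2.2⟩

lemma one_sub_mul_inv_mul [DecidableEq m] (h : IsMPInv A Ap) : (1 - A * Ap) * A = 0 := by
  rw [Matrix.sub_mul, Matrix.one_mul, h.1, sub_self]

lemma one_sub_mul_inv_mul_mul_eq_zero [DecidableEq m] {k l : Type*} [Fintype k] (h : IsMPInv A Ap)
    {Y : Matrix n k Hq} {B : Matrix k l Hq} : (1 - A * Ap) * (A * Y * B) = 0 := by
  rw [← Matrix.mul_assoc, ← Matrix.mul_assoc, h.one_sub_mul_inv_mul, Matrix.zero_mul,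
    Matrix.zero_mul]

lemma mul_one_sub_inv_mul [DecidableEq n] (h : IsMPInv A Ap) : A * (1 - Ap * A) = 0 := by
  rw [Matrix.mul_sub, Matrix.mul_one, h.mul_inv_mul, sub_self]

lemma inv_mul_eq_of_mul_eq (h : IsMPInv A Ap) {E : Matrix m m Hq} (hE : IsSelfAdjoint E)
    (hEA : E * A = A) : Ap * E = Ap := by
  have hP : A * Ap * E = A * Ap := by
    refine hE.mul_eq_of_mul_eq_swap h.isStarProjection_mul_inv.isSelfAdjoint
      h.isStarProjection_mul_inv.isSelfAdjoint ?_
    rw [← Matrix.mul_assoc, hEA]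
  rw [← h.inv_mul_inv, Matrix.mul_assoc, hP]

lemma mul_inv_eq_of_mul_eq (h : IsMPInv A Ap) {E : Matrix n n Hq} (hE : IsSelfAdjoint E)
    (hAE : A * E = A) : E * Ap = Ap := by
  have hP : E * (Ap * A) = Ap * A := by
    refine h.isStarProjection_inv_mul.isSelfAdjoint.mul_eq_of_mul_eq_swap hE
      h.isStarProjection_inv_mul.isSelfAdjoint ?_
    rw [Matrix.mul_assoc, hAE]
  calc E * Ap = E * (Ap * A) * Ap := by rw [Matrix.mul_assoc, Matrix.mul_assoc, h.inv_mul_inv]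
    _ = Ap := by rw [hP, h.2.1]

lemma inv_mul_eq_of_eq_mul [DecidableEq m] (h : IsMPInv A Ap) {R : Matrix m m Hq}
    (hR : IsStarProjection R) {X : Matrix m n Hq} (hA : A = R * X) : Ap * R = Ap :=
  h.inv_mul_eq_of_mul_eq hR.isSelfAdjoint (by rw [hA, ← Matrix.mul_assoc, hR.isIdempotentElem.eq])

lemma inv_mul_self_mul_of_eq_mul [Fintype l] {B : Matrix l n Hq} {Bp : Matrix n l Hq}
    (hA : IsMPInv A Ap) (X : Matrix l m Hq) (hB : B = X * A) :
    Bp * B * (Ap * A) = Bp * B := by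
  rw [Matrix.mul_assoc, hB, Matrix.mul_assoc, hA.mul_inv_mul]

lemma fromCols_mul_inv_eq [DecidableEq n] {L K : Matrix n n Hq} {Cp : Matrix (n ⊕ n) n Hq}
    (hL : IsStarProjection L) (hLK : L * K = K) (h : IsMPInv (fromCols L K) Cp) :
    fromCols L K * Cp = L := by
  have hLC : L * fromCols L K = fromCols L K := by
    rw [Matrix.mul_fromCols, hL.isIdempotentElem.eq, hLK]
  have hCL : fromCols L K * (fromRows 1 0 : Matrix (n ⊕ n) n Hq) = L := by
    rw [Matrix.fromCols_mul_fromRows, Matrix.mul_one, Matrix.mul_zero, add_zero]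
  -- `L` and `fromCols L K * Cp` are self-adjoint idempotents with the same range
  have h₁ : fromCols L K * Cp * L = L :=
    calc fromCols L K * Cp * L
        = fromCols L K * Cp * (fromCols L K * (fromRows 1 0 : Matrix (n ⊕ n) n Hq)) := by rw [hCL]
      _ = L := by rw [← Matrix.mul_assoc, h.1, hCL]
  have h₂ : L * (fromCols L K * Cp) = fromCols L K * Cp := by
    rw [← Matrix.mul_assoc, hLC]
  rw [← h₂]
  exact h.isStarProjection_mul_inv.isSelfAdjoint.mul_eq_of_mul_eq_swap hL.isSelfAdjoint
    hL.isSelfAdjoint h₁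

lemma one_sub_mul_inv_mul_add_mul_eq_zero [DecidableEq m] {η : Hq} (hη : η * η = -1)
    (h : IsMPInv A Ap) (U : Matrix m n Hq) (V : Matrix n m Hq) :
    (1 - A * Ap) * (U * etaCT η A + A * V) * etaCT η (1 - A * Ap) = 0 := by
  have hRA : (1 - A * Ap) * A = 0 := h.one_sub_mul_inv_mul
  rw [Matrix.mul_add, Matrix.add_mul, ← Matrix.mul_assoc _ A, hRA, Matrix.zero_mul,
    Matrix.zero_mul, add_zero, Matrix.mul_assoc, Matrix.mul_assoc, ← etaCT_mul hη, hRA,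
    etaCT_zero, Matrix.mul_zero, Matrix.mul_zero]

end IsMPInv

section Solvability

variable {η : Hq} {m n k : Type*} [Fintype m] [DecidableEq m] [Fintype n] [Fintype k]

theorem exists_mul_add_etaCT_eq_iff (hη : η * η = -1) {A : Matrix m n Hq} {Ap : Matrix n m Hq}
    (h : IsMPInv A Ap) {D : Matrix m m Hq} (hD : etaCT η D = D) :
    (∃ X : Matrix n m Hq, A * X + etaCT η (A * X) = D) ↔
      (1 - A * Ap) * D * etaCT η (1 - A * Ap) = 0 := by
  constructor
  · rintro ⟨X, rfl⟩
    have hRA : (1 - A * Ap) * A = 0 := h.one_sub_mul_inv_mul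
    calc (1 - A * Ap) * (A * X + etaCT η (A * X)) * etaCT η (1 - A * Ap)
        = (1 - A * Ap) * A * X * etaCT η (1 - A * Ap)
          + (1 - A * Ap) * etaCT η X * etaCT η ((1 - A * Ap) * A) := by
          simp only [etaCT_mul hη, Matrix.mul_add, Matrix.add_mul, Matrix.mul_assoc]
      _ = 0 := by rw [hRA, etaCT_zero]; simp
  · intro h0
    set P := A * Ap
    -- `X := Ap D - ½ Ap D P^{η*}` works because `D = P D + D P^{η*} - P D P^{η*}`
    refine ⟨Ap * D - (2⁻¹ : ℝ) • (Ap * (D * etaCT η P)), ?_⟩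
    have hAX : A * (Ap * D - (2⁻¹ : ℝ) • (Ap * (D * etaCT η P)))
        = P * D - (2⁻¹ : ℝ) • (P * D * etaCT η P) := by
      simp only [Matrix.mul_sub, Matrix.mul_smul, Matrix.mul_assoc, P]
    have hsym : etaCT η (P * D * etaCT η P) = P * D * etaCT η P := by
      simp only [etaCT_mul hη, etaCT_etaCT hη, hD, Matrix.mul_assoc]
    have hsplit : D - P * D - D * etaCT η P + P * D * etaCT η P = 0 := by
      rw [← h0, etaCT_sub, etaCT_one hη]
      noncomm_ring
    rw [hAX, etaCT_sub, etaCT_smul, hsym, etaCT_mul hη P D, hD]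
    calc P * D - (2⁻¹ : ℝ) • (P * D * etaCT η P)
          + (D * etaCT η P - (2⁻¹ : ℝ) • (P * D * etaCT η P))
        = P * D + D * etaCT η P - ((2⁻¹ : ℝ) + 2⁻¹) • (P * D * etaCT η P) := by
          rw [add_smul]; abel
      _ = P * D + D * etaCT η P - P * D * etaCT η P
          + (D - P * D - D * etaCT η P + P * D * etaCT η P) := by
          rw [hsplit]; norm_num
      _ = D := by abel

theorem exists_etaHermitian_mul_mul_etaCT_eq (hη : η * η = -1) {A : Matrix m n Hq}
    {Ap : Matrix n m Hq} {D : Matrix m m Hq} (hD : etaCT η D = D)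
    (hRD : (1 - A * Ap) * D = 0) :
    ∃ Y : Matrix n n Hq, etaCT η Y = Y ∧ A * Y * etaCT η A = D := by
  have hPD : A * Ap * D = D := by
    rwa [Matrix.sub_mul, Matrix.one_mul, sub_eq_zero, eq_comm] at hRD
  refine ⟨Ap * D * etaCT η Ap, ?_, ?_⟩
  · simp only [etaCT_mul hη, etaCT_etaCT hη, hD, Matrix.mul_assoc]
  · calc A * (Ap * D * etaCT η Ap) * etaCT η A = A * Ap * D * etaCT η (A * Ap) := by
          simp only [etaCT_mul hη, Matrix.mul_assoc]
      _ = etaCT η (A * Ap * D) := by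
          rw [etaCT_mul hη (A * Ap) D, hD, hPD]
      _ = D := by rw [hPD, hD]

theorem exists_etaHermitian_mul_mul_etaCT_eq_mul (hη : η * η = -1) [DecidableEq n]
    {R : Matrix m m Hq} (hR : IsStarProjection R) {b : Matrix m n Hq} {bp : Matrix n m Hq}
    (hb : IsMPInv b bp) {Mp : Matrix n m Hq} (hM : IsMPInv (R * b) Mp) {S : Matrix m m Hq}
    (hS : etaCT η S = S) (h₁ : (1 - R * b * Mp) * (R * S) = 0)
    (h₂ : R * S * etaCT η (1 - b * bp) = 0) :
    ∃ Y : Matrix n n Hq, etaCT η Y = Y ∧ R * b * Y * etaCT η b = R * S := by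
  set M := R * b
  set N := R * S
  have hMpR : Mp * R = Mp :=
    hM.inv_mul_eq_of_mul_eq hR.isSelfAdjoint (by rw [← Matrix.mul_assoc, hR.isIdempotentElem.eq])
  have hMpb : Mp * b = Mp * M := by simp only [M, ← Matrix.mul_assoc, hMpR]
  have hN₁ : M * (Mp * N) = N := by
    rwa [Matrix.sub_mul, Matrix.one_mul, sub_eq_zero, eq_comm, Matrix.mul_assoc] at h₁
  have hN₂ : N * etaCT η (b * bp) = N := by
    rwa [etaCT_sub, etaCT_one hη, Matrix.mul_sub, Matrix.mul_one, sub_eq_zero, eq_comm] at h₂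
  -- `Z` contributes `N (b M⁺)^{η*}` and `V` the missing `N (b L_M b⁺)^{η*}`; the symmetrizing
  -- term `V^{η*}` is annihilated by `M` on the left
  set w := b * ((1 - Mp * M) * bp)
  set Z := Mp * N * etaCT η R * etaCT η Mp
  set V := Mp * N * etaCT η w * etaCT η bp
  have hZ : etaCT η Z = Z := by
    simp only [Z, N, etaCT_mul hη, etaCT_etaCT hη, hS, Matrix.mul_assoc]
  refine ⟨Z + V + etaCT η V, ?_, ?_⟩
  · rw [etaCT_add, etaCT_add, hZ, etaCT_etaCT hη]
    abel
  have hMZ : M * Z * etaCT η b = N * etaCT η (b * Mp) := by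
    calc M * Z * etaCT η b = M * (Mp * N) * etaCT η (b * Mp * R) := by
          simp only [Z, etaCT_mul hη, Matrix.mul_assoc]
      _ = N * etaCT η (b * Mp) := by rw [hN₁, Matrix.mul_assoc b, hMpR]
  have hMV : M * V * etaCT η b = N * etaCT η w := by
    calc M * V * etaCT η b = M * (Mp * N) * etaCT η (b * bp * w) := by
          simp only [V, etaCT_mul hη, Matrix.mul_assoc]
      _ = N * etaCT η w := by
          simp only [w, ← Matrix.mul_assoc, hb.1, hN₁]
  have hMV' : M * etaCT η V * etaCT η b = 0 := by
    have hMLM : M * bp * b * (1 - Mp * M) = 0 := by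
      have hMbb : M * bp * b = M := by simp only [M, Matrix.mul_assoc, hb.mul_inv_mul]
      rw [hMbb, hM.mul_one_sub_inv_mul]
    calc M * etaCT η V * etaCT η b
        = M * bp * b * (1 - Mp * M) * (bp * (etaCT η N * (etaCT η Mp * etaCT η b))) := by
          simp only [V, w, etaCT_mul hη, etaCT_etaCT hη, Matrix.mul_assoc]
      _ = 0 := by rw [hMLM, Matrix.zero_mul]
  have hw : N * etaCT η w = N - N * etaCT η (b * Mp) := by
    have : w = b * bp - b * Mp * (b * bp) := by
      simp only [w, Matrix.sub_mul, Matrix.one_mul, Matrix.mul_sub, ← hMpb, Matrix.mul_assoc]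
    rw [this, etaCT_sub, etaCT_mul hη (b * Mp), Matrix.mul_sub, hN₂, ← Matrix.mul_assoc, hN₂]
  calc M * (Z + V + etaCT η V) * etaCT η b
      = M * Z * etaCT η b + M * V * etaCT η b + M * etaCT η V * etaCT η b := by
        simp only [Matrix.mul_add, Matrix.add_mul]
    _ = N := by rw [hMZ, hMV, hMV', hw]; abel

theorem exists_etaHermitian_two_sandwiches_iff (hη : η * η = -1) [DecidableEq k]
    [DecidableEq n] {a : Matrix m k Hq} {ap : Matrix k m Hq} {b : Matrix m n Hq}
    {bp : Matrix n m Hq} {M : Matrix m n Hq} {Mp : Matrix n m Hq} (ha : IsMPInv a ap)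
    (hb : IsMPInv b bp) (hM : M = (1 - a * ap) * b) (hMp : IsMPInv M Mp) {S : Matrix m m Hq}
    (hS : etaCT η S = S) :
    (∃ (Y₁ : Matrix k k Hq) (Y₂ : Matrix n n Hq), etaCT η Y₁ = Y₁ ∧ etaCT η Y₂ = Y₂ ∧
        a * Y₁ * etaCT η a + b * Y₂ * etaCT η b = S) ↔
      (1 - M * Mp) * (1 - a * ap) * S = 0 ∧
        (1 - a * ap) * S * etaCT η (1 - b * bp) = 0 := by
  subst hM
  have hR : IsStarProjection (1 - a * ap) := ha.isStarProjection_mul_inv.one_sub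
  constructor
  · rintro ⟨Y₁, Y₂, -, -, rfl⟩
    have hRS : (1 - a * ap) * (a * Y₁ * etaCT η a + b * Y₂ * etaCT η b)
        = (1 - a * ap) * b * Y₂ * etaCT η b := by
      rw [Matrix.mul_add, ha.one_sub_mul_inv_mul_mul_eq_zero, zero_add]
      simp only [Matrix.mul_assoc]
    refine ⟨by rw [Matrix.mul_assoc, hRS, hMp.one_sub_mul_inv_mul_mul_eq_zero], ?_⟩
    rw [hRS, Matrix.mul_assoc, ← etaCT_mul hη, hb.one_sub_mul_inv_mul, etaCT_zero,
      Matrix.mul_zero]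
  · rintro ⟨h₁, h₂⟩
    obtain ⟨Y₂, hY₂, hY₂eq⟩ := exists_etaHermitian_mul_mul_etaCT_eq_mul hη hR hb hMp hS
      (by rw [← Matrix.mul_assoc]; exact h₁) h₂
    have hD : etaCT η (S - b * Y₂ * etaCT η b) = S - b * Y₂ * etaCT η b := by
      simp only [etaCT_sub, etaCT_mul hη, etaCT_etaCT hη, hS, hY₂, Matrix.mul_assoc]
    obtain ⟨Y₁, hY₁, hY₁eq⟩ := exists_etaHermitian_mul_mul_etaCT_eq hη hD (by
      rw [Matrix.mul_sub, ← hY₂eq]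
      simp only [Matrix.mul_assoc, sub_self])
    exact ⟨Y₁, Y₂, hY₁, hY₂, by rw [hY₁eq, sub_add_cancel]⟩

end Solvability

section Diamond

variable {η : Hq} {n : Type*} [Fintype n]

structure IsProjDiamond (P₁ P₂ P₃ P₄ : Matrix n n Hq) : Prop where
  isStarProjection₁ : IsStarProjection P₁
  isStarProjection₂ : IsStarProjection P₂
  isStarProjection₃ : IsStarProjection P₃
  isStarProjection₄ : IsStarProjection P₄
  mul₁₂ : P₁ * P₂ = P₁
  mul₁₃ : P₁ * P₃ = P₁
  mul₂₄ : P₂ * P₄ = P₂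
  mul₃₄ : P₃ * P₄ = P₃

/-- Relations forced on the targets of `P₁YQ₄ = X₁`, `P₂YQ₃ = X₂`, `P₃YQ₂ = X₃`, `P₄YQ₁ = X₄`
(`Qᵢ = Pᵢ^{η*}`) by the overlaps of these corners. -/
structure CornerCompatible (η : Hq) (P₁ P₂ P₃ P₄ X₁ X₂ X₃ X₄ : Matrix n n Hq) : Prop where
  P₁_mul_X₁ : P₁ * X₁ = X₁
  X₁_mul₁ : X₁ * etaCT η P₁ = P₁ * X₄
  X₁_mul₂ : X₁ * etaCT η P₂ = P₁ * X₃
  X₁_mul₃ : X₁ * etaCT η P₃ = P₁ * X₂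
  X₁_mul₄ : X₁ * etaCT η P₄ = X₁
  P₂_mul_X₂ : P₂ * X₂ = X₂
  X₂_mul₁ : X₂ * etaCT η P₁ = P₂ * X₄
  X₂_mul₃ : X₂ * etaCT η P₃ = X₂
  P₃_mul_X₃ : P₃ * X₃ = X₃
  X₃_mul₁ : X₃ * etaCT η P₁ = P₃ * X₄
  X₃_mul₂ : X₃ * etaCT η P₂ = X₃
  P₄_mul_X₄ : P₄ * X₄ = X₄
  X₄_mul₁ : X₄ * etaCT η P₁ = X₄
  X₄_mul₂ : X₄ * etaCT η P₂ = X₄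

namespace IsProjDiamond

variable {P₁ P₂ P₃ P₄ : Matrix n n Hq}

lemma mul₂₁ (hP : IsProjDiamond P₁ P₂ P₃ P₄) : P₂ * P₁ = P₁ :=
  hP.isStarProjection₁.isSelfAdjoint.mul_eq_of_mul_eq_swap hP.isStarProjection₂.isSelfAdjoint
    hP.isStarProjection₁.isSelfAdjoint hP.mul₁₂

lemma mul₃₁ (hP : IsProjDiamond P₁ P₂ P₃ P₄) : P₃ * P₁ = P₁ :=
  hP.isStarProjection₁.isSelfAdjoint.mul_eq_of_mul_eq_swap hP.isStarProjection₃.isSelfAdjoint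
    hP.isStarProjection₁.isSelfAdjoint hP.mul₁₃

lemma mul₄₂ (hP : IsProjDiamond P₁ P₂ P₃ P₄) : P₄ * P₂ = P₂ :=
  hP.isStarProjection₂.isSelfAdjoint.mul_eq_of_mul_eq_swap hP.isStarProjection₄.isSelfAdjoint
    hP.isStarProjection₂.isSelfAdjoint hP.mul₂₄

lemma mul₄₃ (hP : IsProjDiamond P₁ P₂ P₃ P₄) : P₄ * P₃ = P₃ :=
  hP.isStarProjection₃.isSelfAdjoint.mul_eq_of_mul_eq_swap hP.isStarProjection₄.isSelfAdjoint
    hP.isStarProjection₃.isSelfAdjoint hP.mul₃₄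

lemma mul₁₄ (hP : IsProjDiamond P₁ P₂ P₃ P₄) : P₁ * P₄ = P₁ := by
  rw [← hP.mul₁₂, Matrix.mul_assoc, hP.mul₂₄]

lemma mul₄₁ (hP : IsProjDiamond P₁ P₂ P₃ P₄) : P₄ * P₁ = P₁ := by
  rw [← hP.mul₂₁, ← Matrix.mul_assoc, hP.mul₄₂]

end IsProjDiamond

variable [DecidableEq n]

noncomputable def cornerObstruction (η : Hq) (P₁ P₂ P₃ X₂ X₃ X₄ : Matrix n n Hq) : Matrix n n Hq :=
  (P₂ - P₁) * (X₃ - X₂ * etaCT η P₂) + P₂ * (1 - P₃) * X₄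

/-- `X₁ + (1 - P₁) X₂` already has the prescribed `(P₁, Q₄)` and `(P₂, Q₃)` corners; the remaining
terms leave these alone and are tuned (in `exists_sandwich_iff`) to repair the other two corners. -/
noncomputable def cornerSolution (η : Hq) (P₁ P₂ P₃ P₄ X₁ X₂ X₄ W U : Matrix n n Hq) :
    Matrix n n Hq :=
  X₁ + (1 - P₁) * X₂ + (P₄ - P₂) * X₄ + (1 - P₂) * W
    + (P₂ - P₁) * U * (etaCT η P₄ - etaCT η P₃)

namespace IsProjDiamond

variable {P₁ P₂ P₃ P₄ X₁ X₂ X₃ X₄ : Matrix n n Hq}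

lemma mul_mul_etaCT_eq_sub_mul_mul_etaCT (hη : η * η = -1) (hP : IsProjDiamond P₁ P₂ P₃ P₄)
    {Λ : Matrix n n Hq} (h₁₄ : P₁ * Λ * etaCT η P₄ = 0) (h₂₃ : P₂ * Λ * etaCT η P₃ = 0) :
    P₂ * Λ * etaCT η P₂ = (P₂ - P₁) * Λ * etaCT η (P₂ * (1 - P₃)) := by
  have e₁ : P₁ * Λ * etaCT η P₂ = 0 := by
    rw [← etaCT_mul_etaCT hη hP.mul₂₄, ← Matrix.mul_assoc, h₁₄, Matrix.zero_mul]
  have e₂ : P₂ * Λ * (etaCT η P₃ * etaCT η P₂) = 0 := by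
    rw [← Matrix.mul_assoc, h₂₃, Matrix.zero_mul]
  have e₃ : P₁ * Λ * (etaCT η P₃ * etaCT η P₂) = 0 := by
    rw [← etaCT_mul_etaCT hη hP.mul₃₄, ← Matrix.mul_assoc, ← Matrix.mul_assoc, h₁₄,
      Matrix.zero_mul, Matrix.zero_mul]
  have hG : etaCT η (P₂ * (1 - P₃)) = etaCT η P₂ - etaCT η P₃ * etaCT η P₂ := by
    rw [etaCT_mul hη, etaCT_sub, etaCT_one hη, Matrix.sub_mul, Matrix.one_mul]
  rw [hG, Matrix.mul_sub, Matrix.sub_mul P₂ P₁, Matrix.sub_mul (P₂ * Λ),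
    Matrix.sub_mul (P₂ * Λ), e₁, e₂, e₃]
  abel

theorem obstruction_eq_zero_of_sandwich (hη : η * η = -1) (hP : IsProjDiamond P₁ P₂ P₃ P₄)
    {Gp : Matrix n n Hq} (hG : IsMPInv (P₂ * (1 - P₃)) Gp) {Y X₁ X₂ X₃ X₄ : Matrix n n Hq}
    (h₁ : P₁ * Y * etaCT η P₄ = X₁) (h₂ : P₂ * Y * etaCT η P₃ = X₂)
    (h₃ : P₃ * Y * etaCT η P₂ = X₃) (h₄ : P₄ * Y * etaCT η P₁ = X₄) :
    (1 - P₂ * (1 - P₃) * Gp) * (P₂ * (X₃ + (1 - P₃) * X₄ - (X₁ + (1 - P₁) * X₂)) * etaCT η P₂)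
      * etaCT η (1 - P₂ * (1 - P₃) * Gp) = 0 := by
  subst h₁ h₂ h₃ h₄
  have hP₁ := hP.isStarProjection₁.isIdempotentElem.eq
  have hP₂ := hP.isStarProjection₂.isIdempotentElem.eq
  have hP₃ := hP.isStarProjection₃.isIdempotentElem.eq
  -- `Y - F₁` vanishes on the corners `(P₁, Q₄)`, `(P₂, Q₃)`, and `Y - F₂` on `(P₃, Q₂)`
  set Λ₁ := Y - (P₁ * Y * etaCT η P₄ + (1 - P₁) * (P₂ * Y * etaCT η P₃))
  set Λ₂ := Y - (P₃ * Y * etaCT η P₂ + (1 - P₃) * (P₄ * Y * etaCT η P₁))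
  have h₁₄ : P₁ * Λ₁ * etaCT η P₄ = 0 := by
    simp only [Λ₁, Matrix.mul_sub, Matrix.sub_mul, Matrix.mul_add, Matrix.add_mul,
      Matrix.one_mul, Matrix.mul_assoc, mul_mul_of_mul_eq hP₁, mul_mul_of_mul_eq hP.mul₁₂,
      etaCT_mul_etaCT hη hP.isStarProjection₄.isIdempotentElem.eq,
      etaCT_mul_etaCT hη hP.mul₄₃]
    abel
  have h₂₃ : P₂ * Λ₁ * etaCT η P₃ = 0 := by
    simp only [Λ₁, Matrix.mul_sub, Matrix.sub_mul, Matrix.mul_add, Matrix.add_mul,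
      Matrix.one_mul, Matrix.mul_assoc, mul_mul_of_mul_eq hP₂, mul_mul_of_mul_eq hP.mul₂₁,
      mul_mul_of_mul_eq hP.mul₁₂, etaCT_mul_etaCT hη hP₃, etaCT_mul_etaCT hη hP.mul₃₄]
    abel
  have h₃₂ : P₃ * Λ₂ * etaCT η P₂ = 0 := by
    simp only [Λ₂, Matrix.mul_sub, Matrix.sub_mul, Matrix.mul_add, Matrix.add_mul,
      Matrix.one_mul, Matrix.mul_assoc, mul_mul_of_mul_eq hP₃, mul_mul_of_mul_eq hP.mul₃₄,
      etaCT_mul_etaCT hη hP₂]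
    abel
  have hE : P₂ * (P₃ * Y * etaCT η P₂ + (1 - P₃) * (P₄ * Y * etaCT η P₁)
      - (P₁ * Y * etaCT η P₄ + (1 - P₁) * (P₂ * Y * etaCT η P₃))) * etaCT η P₂
      = P₂ * Λ₁ * etaCT η P₂ - P₂ * Λ₂ * etaCT η P₂ := by
    rw [← Matrix.sub_mul, ← Matrix.mul_sub, sub_sub_sub_cancel_left]
  have h0 := hG.one_sub_mul_inv_mul_add_mul_eq_zero hη ((P₂ - P₁) * Λ₁) (-(Λ₂ * etaCT η P₂))
  rwa [Matrix.mul_neg, ← sub_eq_add_neg, ← hP.mul_mul_etaCT_eq_sub_mul_mul_etaCT hη h₁₄ h₂₃,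
    ← mul_mul_eq_mul_one_sub_mul h₃₂, ← hE] at h0

lemma obstruction_eq (hP : IsProjDiamond P₁ P₂ P₃ P₄)
    (hX : CornerCompatible η P₁ P₂ P₃ P₄ X₁ X₂ X₃ X₄) :
    P₂ * (X₃ + (1 - P₃) * X₄ - (X₁ + (1 - P₁) * X₂)) * etaCT η P₂
      = cornerObstruction η P₁ P₂ P₃ X₂ X₃ X₄ := by
  simp only [cornerObstruction, Matrix.mul_sub, Matrix.sub_mul, Matrix.mul_add, Matrix.add_mul,
    Matrix.mul_one, Matrix.one_mul, Matrix.mul_assoc, hX.X₃_mul₂, hX.X₄_mul₂, hX.X₁_mul₂,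
    mul_mul_of_mul_eq hP.mul₂₁]
  abel

lemma cornerObstruction_mul_etaCT₁ (hη : η * η = -1) (hP : IsProjDiamond P₁ P₂ P₃ P₄)
    (hX : CornerCompatible η P₁ P₂ P₃ P₄ X₁ X₂ X₃ X₄) :
    cornerObstruction η P₁ P₂ P₃ X₂ X₃ X₄ * etaCT η P₁ = 0 := by
  simp only [cornerObstruction, Matrix.mul_sub, Matrix.sub_mul, Matrix.add_mul, Matrix.mul_one,
    Matrix.mul_assoc, hX.X₃_mul₁, hX.X₄_mul₁, etaCT_mul_etaCT hη hP.mul₁₂, hX.X₂_mul₁,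
    mul_mul_of_mul_eq hP.isStarProjection₂.isIdempotentElem.eq, mul_mul_of_mul_eq hP.mul₁₃,
    mul_mul_of_mul_eq hP.mul₁₂]
  abel

lemma cornerObstruction_mul_etaCT₂ (hη : η * η = -1) (hP : IsProjDiamond P₁ P₂ P₃ P₄)
    (hX : CornerCompatible η P₁ P₂ P₃ P₄ X₁ X₂ X₃ X₄) :
    cornerObstruction η P₁ P₂ P₃ X₂ X₃ X₄ * etaCT η P₂ = cornerObstruction η P₁ P₂ P₃ X₂ X₃ X₄ := by
  simp only [cornerObstruction, Matrix.sub_mul, Matrix.add_mul, Matrix.mul_assoc, hX.X₃_mul₂,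
    hX.X₄_mul₂, etaCT_mul_etaCT hη hP.isStarProjection₂.isIdempotentElem.eq]

lemma mul_cornerObstruction₁ (hP : IsProjDiamond P₁ P₂ P₃ P₄) :
    P₁ * cornerObstruction η P₁ P₂ P₃ X₂ X₃ X₄ = 0 := by
  simp only [cornerObstruction, Matrix.mul_sub, Matrix.sub_mul, Matrix.mul_add, Matrix.mul_one,
    Matrix.mul_assoc, mul_mul_of_mul_eq hP.mul₁₂, mul_mul_of_mul_eq hP.mul₁₃,
    mul_mul_of_mul_eq hP.isStarProjection₁.isIdempotentElem.eq]
  abel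

lemma mul_cornerObstruction₂ (hP : IsProjDiamond P₁ P₂ P₃ P₄) :
    P₂ * cornerObstruction η P₁ P₂ P₃ X₂ X₃ X₄ = cornerObstruction η P₁ P₂ P₃ X₂ X₃ X₄ := by
  simp only [cornerObstruction, Matrix.mul_add, ← Matrix.mul_assoc, Matrix.mul_sub P₂ P₂ P₁,
    hP.isStarProjection₂.isIdempotentElem.eq, hP.mul₂₁]

lemma cornerObstruction_sub_eq_mul_etaCT (hη : η * η = -1) (hP : IsProjDiamond P₁ P₂ P₃ P₄)
    {Gp : Matrix n n Hq} (hG : IsMPInv (P₂ * (1 - P₃)) Gp)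
    (h : (1 - P₂ * (1 - P₃) * Gp) * cornerObstruction η P₁ P₂ P₃ X₂ X₃ X₄
      * etaCT η (1 - P₂ * (1 - P₃) * Gp) = 0) :
    cornerObstruction η P₁ P₂ P₃ X₂ X₃ X₄
        - P₂ * (1 - P₃) * (Gp * cornerObstruction η P₁ P₂ P₃ X₂ X₃ X₄)
      = (P₂ - P₁) * ((cornerObstruction η P₁ P₂ P₃ X₂ X₃ X₄
        - Gp * cornerObstruction η P₁ P₂ P₃ X₂ X₃ X₄) * etaCT η Gp) * etaCT η (P₂ * (1 - P₃)) := by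
  have hP₁E := hP.mul_cornerObstruction₁ (η := η) (X₂ := X₂) (X₃ := X₃) (X₄ := X₄)
  have hP₂E := hP.mul_cornerObstruction₂ (η := η) (X₂ := X₂) (X₃ := X₃) (X₄ := X₄)
  generalize cornerObstruction η P₁ P₂ P₃ X₂ X₃ X₄ = E at h hP₁E hP₂E ⊢
  set G := P₂ * (1 - P₃)
  have hL₃ : IsStarProjection (1 - P₃) := hP.isStarProjection₃.one_sub
  have hL₃Gp : (1 - P₃) * Gp = Gp := by
    refine hG.mul_inv_eq_of_mul_eq hL₃.isSelfAdjoint ?_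
    rw [Matrix.mul_assoc, hL₃.isIdempotentElem.eq]
  have hP₁L₃ : P₁ * (1 - P₃) = 0 := by rw [Matrix.mul_sub, Matrix.mul_one, hP.mul₁₃, sub_self]
  have hE : (P₂ - P₁) * (E - Gp * E) = E - G * (Gp * E) :=
    calc (P₂ - P₁) * (E - Gp * E) = (P₂ - P₁) * E - (P₂ - P₁) * (1 - P₃) * (Gp * E) := by
          rw [Matrix.mul_sub, Matrix.mul_assoc (P₂ - P₁), ← Matrix.mul_assoc (1 - P₃), hL₃Gp]
      _ = E - G * (Gp * E) := by
          rw [Matrix.sub_mul P₂ P₁ E, hP₂E, hP₁E, sub_zero, Matrix.sub_mul P₂ P₁ (1 - P₃), hP₁L₃,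
            sub_zero]
  have h' : E - G * (Gp * E) = (E - G * (Gp * E)) * etaCT η (G * Gp) := by
    rwa [etaCT_sub, etaCT_one hη, Matrix.mul_sub, Matrix.mul_one, sub_eq_zero, Matrix.sub_mul,
      Matrix.one_mul, Matrix.mul_assoc] at h
  rw [Matrix.mul_assoc (P₂ - P₁), Matrix.mul_assoc (E - Gp * E), ← etaCT_mul hη G Gp,
    ← Matrix.mul_assoc (P₂ - P₁), hE]
  exact h'

variable {W U : Matrix n n Hq}

lemma mul_cornerSolution_mul₁ (hP : IsProjDiamond P₁ P₂ P₃ P₄)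
    (hX : CornerCompatible η P₁ P₂ P₃ P₄ X₁ X₂ X₃ X₄) :
    P₁ * cornerSolution η P₁ P₂ P₃ P₄ X₁ X₂ X₄ W U * etaCT η P₄ = X₁ := by
  have hP₁ := hP.isStarProjection₁.isIdempotentElem.eq
  have h₁ : P₁ * (1 - P₁) = 0 := by rw [Matrix.mul_sub, Matrix.mul_one, hP₁, sub_self]
  have h₂ : P₁ * (1 - P₂) = 0 := by rw [Matrix.mul_sub, Matrix.mul_one, hP.mul₁₂, sub_self]
  have h₃ : P₁ * (P₄ - P₂) = 0 := by rw [Matrix.mul_sub, hP.mul₁₄, hP.mul₁₂, sub_self]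
  have h₄ : P₁ * (P₂ - P₁) = 0 := by rw [Matrix.mul_sub, hP.mul₁₂, hP₁, sub_self]
  simp only [cornerSolution, Matrix.mul_add, ← Matrix.mul_assoc, h₁, h₂, h₃, h₄,
    Matrix.zero_mul, add_zero, hX.P₁_mul_X₁, hX.X₁_mul₄]

lemma mul_cornerSolution_mul₂ (hη : η * η = -1) (hP : IsProjDiamond P₁ P₂ P₃ P₄)
    (hX : CornerCompatible η P₁ P₂ P₃ P₄ X₁ X₂ X₃ X₄) :
    P₂ * cornerSolution η P₁ P₂ P₃ P₄ X₁ X₂ X₄ W U * etaCT η P₃ = X₂ := by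
  have hP₂ := hP.isStarProjection₂.isIdempotentElem.eq
  have h₁ : P₂ * (1 - P₁) = P₂ - P₁ := by rw [Matrix.mul_sub, Matrix.mul_one, hP.mul₂₁]
  have h₂ : P₂ * (1 - P₂) = 0 := by rw [Matrix.mul_sub, Matrix.mul_one, hP₂, sub_self]
  have h₃ : P₂ * (P₄ - P₂) = 0 := by rw [Matrix.mul_sub, hP.mul₂₄, hP₂, sub_self]
  have h₄ : (etaCT η P₄ - etaCT η P₃) * etaCT η P₃ = 0 := by
    rw [Matrix.sub_mul, etaCT_mul_etaCT hη hP.mul₃₄,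
      etaCT_mul_etaCT hη hP.isStarProjection₃.isIdempotentElem.eq, sub_self]
  calc P₂ * cornerSolution η P₁ P₂ P₃ P₄ X₁ X₂ X₄ W U * etaCT η P₃
      = P₂ * (X₁ * etaCT η P₃) + P₂ * (1 - P₁) * (X₂ * etaCT η P₃)
        + P₂ * (P₄ - P₂) * X₄ * etaCT η P₃ + P₂ * (1 - P₂) * W * etaCT η P₃
        + P₂ * ((P₂ - P₁) * U) * ((etaCT η P₄ - etaCT η P₃) * etaCT η P₃) := by
        simp only [cornerSolution, Matrix.mul_add, Matrix.add_mul, Matrix.mul_assoc]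
    _ = X₂ := by
        rw [h₁, h₂, h₃, h₄, hX.X₁_mul₃, hX.X₂_mul₃, ← Matrix.mul_assoc, hP.mul₂₁, Matrix.sub_mul,
          hX.P₂_mul_X₂]
        simp only [Matrix.zero_mul, Matrix.mul_zero, add_zero]
        abel

lemma mul_cornerSolution_mul₄ (hη : η * η = -1) (hP : IsProjDiamond P₁ P₂ P₃ P₄)
    (hX : CornerCompatible η P₁ P₂ P₃ P₄ X₁ X₂ X₃ X₄) (hW : W * etaCT η P₁ = 0) :
    P₄ * cornerSolution η P₁ P₂ P₃ P₄ X₁ X₂ X₄ W U * etaCT η P₁ = X₄ := by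
  have h₁ : P₄ * (1 - P₁) = P₄ - P₁ := by rw [Matrix.mul_sub, Matrix.mul_one, hP.mul₄₁]
  have h₂ : P₄ * (P₄ - P₂) = P₄ - P₂ := by
    rw [Matrix.mul_sub, hP.isStarProjection₄.isIdempotentElem.eq, hP.mul₄₂]
  have h₃ : (etaCT η P₄ - etaCT η P₃) * etaCT η P₁ = 0 := by
    rw [Matrix.sub_mul, etaCT_mul_etaCT hη hP.mul₁₄, etaCT_mul_etaCT hη hP.mul₁₃, sub_self]
  calc P₄ * cornerSolution η P₁ P₂ P₃ P₄ X₁ X₂ X₄ W U * etaCT η P₁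
      = P₄ * (X₁ * etaCT η P₁) + P₄ * (1 - P₁) * (X₂ * etaCT η P₁)
        + P₄ * (P₄ - P₂) * (X₄ * etaCT η P₁) + P₄ * (1 - P₂) * (W * etaCT η P₁)
        + P₄ * ((P₂ - P₁) * U) * ((etaCT η P₄ - etaCT η P₃) * etaCT η P₁) := by
        simp only [cornerSolution, Matrix.mul_add, Matrix.add_mul, Matrix.mul_assoc]
    _ = X₄ := by
        rw [h₁, h₂, h₃, hW, hX.X₁_mul₁, hX.X₂_mul₁, hX.X₄_mul₁, ← Matrix.mul_assoc, hP.mul₄₁,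
          Matrix.sub_mul, Matrix.sub_mul, mul_mul_of_mul_eq hP.mul₁₂, mul_mul_of_mul_eq hP.mul₄₂,
          hX.P₄_mul_X₄]
        simp only [Matrix.mul_zero, add_zero]
        abel

lemma mul_cornerSolution_mul₃ (hη : η * η = -1) (hP : IsProjDiamond P₁ P₂ P₃ P₄)
    (hX : CornerCompatible η P₁ P₂ P₃ P₄ X₁ X₂ X₃ X₄) {Gp : Matrix n n Hq}
    (hW : W = X₃ - X₂ * etaCT η P₂ - (P₃ - P₂) * X₄
      - (1 - P₃) * (Gp * cornerObstruction η P₁ P₂ P₃ X₂ X₃ X₄))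
    (hU : cornerObstruction η P₁ P₂ P₃ X₂ X₃ X₄
        - P₂ * (1 - P₃) * (Gp * cornerObstruction η P₁ P₂ P₃ X₂ X₃ X₄)
      = (P₂ - P₁) * U * etaCT η (P₂ * (1 - P₃))) :
    P₃ * cornerSolution η P₁ P₂ P₃ P₄ X₁ X₂ X₄ W U * etaCT η P₂ = X₃ := by
  have hQ₂ := etaCT_mul_etaCT hη hP.isStarProjection₂.isIdempotentElem.eq
  have hWQ : W * etaCT η P₂ = W := by
    rw [hW]
    simp only [Matrix.sub_mul, Matrix.mul_assoc, hX.X₃_mul₂, hQ₂, hX.X₄_mul₂,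
      hP.cornerObstruction_mul_etaCT₂ hη hX]
  have hQ : (etaCT η P₄ - etaCT η P₃) * etaCT η P₂ = etaCT η (P₂ * (1 - P₃)) := by
    rw [etaCT_mul hη, etaCT_sub, etaCT_one hη, Matrix.sub_mul, Matrix.sub_mul, Matrix.one_mul,
      etaCT_mul_etaCT hη hP.mul₂₄]
  calc P₃ * cornerSolution η P₁ P₂ P₃ P₄ X₁ X₂ X₄ W U * etaCT η P₂
      = P₃ * (X₁ * etaCT η P₂) + P₃ * (1 - P₁) * (X₂ * etaCT η P₂)
        + P₃ * (P₄ - P₂) * (X₄ * etaCT η P₂) + P₃ * (1 - P₂) * (W * etaCT η P₂)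
        + P₃ * ((P₂ - P₁) * U * ((etaCT η P₄ - etaCT η P₃) * etaCT η P₂)) := by
        simp only [cornerSolution, Matrix.mul_add, Matrix.add_mul, Matrix.mul_assoc]
    _ = P₃ * (P₁ * X₃) + P₃ * (1 - P₁) * (X₂ * etaCT η P₂) + P₃ * (P₄ - P₂) * X₄
        + P₃ * (1 - P₂) * W + P₃ * (cornerObstruction η P₁ P₂ P₃ X₂ X₃ X₄
          - P₂ * (1 - P₃) * (Gp * cornerObstruction η P₁ P₂ P₃ X₂ X₃ X₄)) := by
        rw [hX.X₁_mul₂, hX.X₄_mul₂, hWQ, hQ, ← Matrix.mul_assoc, ← hU]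
    _ = X₃ := by
        rw [hW]
        simp only [cornerObstruction, Matrix.mul_add, Matrix.mul_sub, Matrix.sub_mul,
          Matrix.mul_one, Matrix.one_mul, Matrix.mul_assoc, mul_mul_of_mul_eq hP.mul₃₁,
          mul_mul_of_mul_eq hP.mul₃₄, mul_mul_of_mul_eq hP.isStarProjection₃.isIdempotentElem.eq,
          mul_mul_of_mul_eq hP.isStarProjection₂.isIdempotentElem.eq, hX.P₃_mul_X₃]
        abel

theorem exists_sandwich_iff (hη : η * η = -1) (hP : IsProjDiamond P₁ P₂ P₃ P₄)
    (hX : CornerCompatible η P₁ P₂ P₃ P₄ X₁ X₂ X₃ X₄) {Gp : Matrix n n Hq}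
    (hG : IsMPInv (P₂ * (1 - P₃)) Gp) :
    (∃ Y, P₁ * Y * etaCT η P₄ = X₁ ∧ P₂ * Y * etaCT η P₃ = X₂ ∧ P₃ * Y * etaCT η P₂ = X₃ ∧
        P₄ * Y * etaCT η P₁ = X₄) ↔
      (1 - P₂ * (1 - P₃) * Gp) * (P₂ * (X₃ + (1 - P₃) * X₄ - (X₁ + (1 - P₁) * X₂)) * etaCT η P₂)
        * etaCT η (1 - P₂ * (1 - P₃) * Gp) = 0 := by
  constructor
  · rintro ⟨Y, h₁, h₂, h₃, h₄⟩
    exact hP.obstruction_eq_zero_of_sandwich hη hG h₁ h₂ h₃ h₄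
  · intro h
    rw [hP.obstruction_eq hX] at h
    have hE₁ := hP.cornerObstruction_mul_etaCT₁ hη hX
    set E := cornerObstruction η P₁ P₂ P₃ X₂ X₃ X₄
    refine ⟨cornerSolution η P₁ P₂ P₃ P₄ X₁ X₂ X₄
        (X₃ - X₂ * etaCT η P₂ - (P₃ - P₂) * X₄ - (1 - P₃) * (Gp * E)) ((E - Gp * E) * etaCT η Gp),
      hP.mul_cornerSolution_mul₁ hX, hP.mul_cornerSolution_mul₂ hη hX,
      hP.mul_cornerSolution_mul₃ hη hX rfl (hP.cornerObstruction_sub_eq_mul_etaCT hη hG h),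
      hP.mul_cornerSolution_mul₄ hη hX ?_⟩
    simp only [Matrix.sub_mul, Matrix.mul_assoc, hX.X₃_mul₁, etaCT_mul_etaCT hη hP.mul₁₂,
      hX.X₂_mul₁, hX.X₄_mul₁, hE₁, Matrix.mul_zero, sub_zero]
    abel

end IsProjDiamond

end Diamond

section Sandwich

variable {η : Hq} {p n : Type*} [Fintype n]

theorem exists_etaHermitian_iff_exists_four (hη : η * η = -1) {C₁ C₂ C₃ C₄ : Matrix p n Hq}
    {E₁ E₂ : Matrix p p Hq} :
    (∃ Y : Matrix n n Hq, etaCT η Y = Y ∧ C₁ * Y * etaCT η C₄ = E₁ ∧ C₂ * Y * etaCT η C₃ = E₂) ↔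
      ∃ Y : Matrix n n Hq, C₁ * Y * etaCT η C₄ = E₁ ∧ C₂ * Y * etaCT η C₃ = E₂ ∧
        C₃ * Y * etaCT η C₂ = etaCT η E₂ ∧ C₄ * Y * etaCT η C₁ = etaCT η E₁ := by
  have hconj : ∀ (A B : Matrix p n Hq) (Y : Matrix n n Hq),
      etaCT η (A * Y * etaCT η B) = B * etaCT η Y * etaCT η A := fun A B Y => by
    simp only [etaCT_mul hη, etaCT_etaCT hη, Matrix.mul_assoc]
  constructor
  · rintro ⟨Y, hY, h₁, h₂⟩
    refine ⟨Y, h₁, h₂, ?_, ?_⟩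
    · rw [← h₂, hconj, hY]
    · rw [← h₁, hconj, hY]
  · rintro ⟨Y, h₁, h₂, h₃, h₄⟩
    -- the η-Hermitian part `½ (Y + Y^{η*})` solves the same two equations
    have hsym : ∀ (A B : Matrix p n Hq) (E : Matrix p p Hq), A * Y * etaCT η B = E →
        B * Y * etaCT η A = etaCT η E →
        A * ((2⁻¹ : ℝ) • (Y + etaCT η Y)) * etaCT η B = E := by
      intro A B E hAB hBA
      have hAB' : A * etaCT η Y * etaCT η B = E := by rw [← etaCT_etaCT hη E, ← hBA, hconj]
      rw [Matrix.mul_smul, Matrix.smul_mul, Matrix.mul_add, Matrix.add_mul, hAB, hAB', ← two_smul ℝ,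
        smul_smul]
      norm_num
    refine ⟨(2⁻¹ : ℝ) • (Y + etaCT η Y), ?_, hsym _ _ _ h₁ h₄, hsym _ _ _ h₂ h₃⟩
    rw [etaCT_smul, etaCT_add, etaCT_etaCT hη, add_comm]

theorem mul_mul_etaCT_eq_iff [Fintype p] (hη : η * η = -1) {A B : Matrix p n Hq}
    {Ap Bp : Matrix n p Hq} (hA : IsMPInv A Ap) (hB : IsMPInv B Bp) {E : Matrix p p Hq}
    (hAE : A * Ap * E = E)
    (hEB : E * etaCT η (B * Bp) = E) (Y : Matrix n n Hq) :
    A * Y * etaCT η B = E ↔ Ap * A * Y * etaCT η (Bp * B) = Ap * E * etaCT η Bp := by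
  constructor
  · rintro rfl
    simp only [etaCT_mul hη, Matrix.mul_assoc]
  · intro h
    calc A * Y * etaCT η B = A * (Ap * A * Y * etaCT η (Bp * B)) * etaCT η B := by
          simp only [etaCT_mul hη, ← Matrix.mul_assoc, hA.1]
          simp only [Matrix.mul_assoc, ← etaCT_mul hη, hB.mul_inv_mul]
      _ = E := by
          rw [h, ← Matrix.mul_assoc, ← Matrix.mul_assoc, hAE, Matrix.mul_assoc, ← etaCT_mul hη, hEB]

end Sandwich

section Nested

variable {η : Hq} {p n : Type*} [Fintype p] [Fintype n]
  {K : Matrix p n Hq} {Ra Rb C : Matrix p p Hq} {C₁p C₂p C₃p C₄p : Matrix n p Hq}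

theorem isProjDiamond_of_nested (hCRa : C * Ra = C) (hCRb : C * Rb = C)
    (h₁ : IsMPInv (C * K) C₁p) (h₂ : IsMPInv (Ra * K) C₂p) (h₃ : IsMPInv (Rb * K) C₃p)
    (h₄ : IsMPInv K C₄p) :
    IsProjDiamond (C₁p * (C * K)) (C₂p * (Ra * K)) (C₃p * (Rb * K)) (C₄p * K) where
  isStarProjection₁ := h₁.isStarProjection_inv_mul
  isStarProjection₂ := h₂.isStarProjection_inv_mul
  isStarProjection₃ := h₃.isStarProjection_inv_mul
  isStarProjection₄ := h₄.isStarProjection_inv_mul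
  mul₁₂ := h₂.inv_mul_self_mul_of_eq_mul C (by rw [← Matrix.mul_assoc, hCRa])
  mul₁₃ := h₃.inv_mul_self_mul_of_eq_mul C (by rw [← Matrix.mul_assoc, hCRb])
  mul₂₄ := h₄.inv_mul_self_mul_of_eq_mul Ra rfl
  mul₃₄ := h₄.inv_mul_self_mul_of_eq_mul Rb rfl

theorem nested_range_relations [DecidableEq p] (hη : η * η = -1) (hRa : IsStarProjection Ra)
    (hRb : IsStarProjection Rb) (hC : IsStarProjection C) (hCRa : C * Ra = C) (hCRb : C * Rb = C)
    {T : Matrix p p Hq} (h₁ : IsMPInv (C * K) C₁p) (h₂ : IsMPInv (Ra * K) C₂p)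
    (h₃ : IsMPInv (Rb * K) C₃p) (g₂ : (1 - Ra * K * C₂p) * (Ra * T * etaCT η Rb) = 0)
    (g₃ : (1 - Rb * K * C₃p) * (Rb * T * etaCT η Ra) = 0)
    (g₄ : (1 - K * C₄p) * (T * etaCT η C) = 0) :
    K * (C₄p * (T * etaCT η C₁p)) = T * etaCT η C₁p ∧
      C₁p * (K * (C₃p * (T * etaCT η C₂p))) = C₁p * (T * etaCT η C₂p) ∧
      C₁p * (K * (C₂p * (T * etaCT η C₃p))) = C₁p * (T * etaCT η C₃p) := by
  have hRaC : C = Ra * C := (hC.isSelfAdjoint.mul_eq_of_mul_eq_swap hRa.isSelfAdjoint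
    hC.isSelfAdjoint hCRa).symm
  have hRbC : C = Rb * C := (hC.isSelfAdjoint.mul_eq_of_mul_eq_swap hRb.isSelfAdjoint
    hC.isSelfAdjoint hCRb).symm
  have a₁ := h₁.inv_mul_eq_of_eq_mul hC (X := K) rfl
  have a₂ := h₁.inv_mul_eq_of_eq_mul hRa (X := C * K) (by rw [← Matrix.mul_assoc, ← hRaC])
  have a₃ := h₁.inv_mul_eq_of_eq_mul hRb (X := C * K) (by rw [← Matrix.mul_assoc, ← hRbC])
  have a₄ := h₂.inv_mul_eq_of_eq_mul hRa (X := K) rfl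
  have a₅ := h₃.inv_mul_eq_of_eq_mul hRb (X := K) rfl
  refine ⟨?_, ?_, ?_⟩
  · simpa only [Matrix.mul_assoc, etaCT_mul_etaCT hη a₁] using
      congrArg (· * etaCT η C₁p) (mul_eq_self_of_one_sub_mul_eq_zero g₄)
  · simpa only [Matrix.mul_assoc, etaCT_mul_etaCT hη a₄, mul_mul_of_mul_eq a₃,
      mul_mul_of_mul_eq a₅] using
      congrArg (fun X => C₁p * X * etaCT η C₂p) (mul_eq_self_of_one_sub_mul_eq_zero g₃)
  · simpa only [Matrix.mul_assoc, etaCT_mul_etaCT hη a₅, mul_mul_of_mul_eq a₂,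
      mul_mul_of_mul_eq a₄] using
      congrArg (fun X => C₁p * X * etaCT η C₃p) (mul_eq_self_of_one_sub_mul_eq_zero g₂)

theorem cornerCompatible_of_nested [DecidableEq p] (hη : η * η = -1) (hRa : IsStarProjection Ra)
    (hRb : IsStarProjection Rb) (hC : IsStarProjection C) (hCRa : C * Ra = C) (hCRb : C * Rb = C)
    {T : Matrix p p Hq} (hT : etaCT η T = T) (h₁ : IsMPInv (C * K) C₁p)
    (h₂ : IsMPInv (Ra * K) C₂p) (h₃ : IsMPInv (Rb * K) C₃p) (h₄ : IsMPInv K C₄p)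
    (g₂ : (1 - Ra * K * C₂p) * (Ra * T * etaCT η Rb) = 0)
    (g₃ : (1 - Rb * K * C₃p) * (Rb * T * etaCT η Ra) = 0)
    (g₄ : (1 - K * C₄p) * (T * etaCT η C) = 0) :
    CornerCompatible η (C₁p * (C * K)) (C₂p * (Ra * K)) (C₃p * (Rb * K)) (C₄p * K)
      (C₁p * (C * T) * etaCT η C₄p) (C₂p * (Ra * T * etaCT η Rb) * etaCT η C₃p)
      (C₃p * (Rb * T * etaCT η Ra) * etaCT η C₂p) (C₄p * (T * etaCT η C) * etaCT η C₁p) := by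
  -- after absorbing `C`, `Ra`, `Rb` into the Moore–Penrose inverses, each relation reduces to
  -- one of the range relations `d₁, d₃, d₄` or their η-conjugates
  obtain ⟨d₁, d₃, d₄⟩ := nested_range_relations hη hRa hRb hC hCRa hCRb h₁ h₂ h₃ g₂ g₃ g₄
  have d₂ : ∀ Z : Matrix p n Hq,
      C₁p * (T * (etaCT η C₄p * (etaCT η K * Z))) = C₁p * (T * Z) := fun Z => by
    simpa only [etaCT_mul hη, etaCT_etaCT hη, hT, Matrix.mul_assoc] using
      congrArg (· * Z) (congrArg (etaCT η) d₁)
  have d₅ : C₂p * (T * (etaCT η C₃p * (etaCT η K * etaCT η C₁p))) = C₂p * (T * etaCT η C₁p) := by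
    simpa only [etaCT_mul hη, etaCT_etaCT hη, hT, Matrix.mul_assoc] using congrArg (etaCT η) d₃
  have d₆ : C₃p * (T * (etaCT η C₂p * (etaCT η K * etaCT η C₁p))) = C₃p * (T * etaCT η C₁p) := by
    simpa only [etaCT_mul hη, etaCT_etaCT hη, hT, Matrix.mul_assoc] using congrArg (etaCT η) d₄
  have a₁ := h₁.inv_mul_eq_of_eq_mul hC (X := K) rfl
  have a₄ := h₂.inv_mul_eq_of_eq_mul hRa (X := K) rfl
  have a₅ := h₃.inv_mul_eq_of_eq_mul hRb (X := K) rfl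
  have a₆ : C₂p * (Ra * K) * C₁p = C₁p := h₁.mul_inv_eq_of_mul_eq
    h₂.isStarProjection_inv_mul.isSelfAdjoint (by
      rw [← hCRa, Matrix.mul_assoc C Ra, Matrix.mul_assoc, h₂.mul_inv_mul])
  have q₁ := etaCT_mul_etaCT hη a₁
  have q₄ := etaCT_mul_etaCT hη a₄
  have q₅ := etaCT_mul_etaCT hη a₅
  have r₁ : ∀ X : Matrix p n Hq, C₁p * (K * (C₁p * X)) = C₁p * X := fun X => by
    simpa only [Matrix.mul_assoc, mul_mul_of_mul_eq a₁] using mul_mul_of_mul_eq h₁.2.1 X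
  have r₂ : ∀ X : Matrix p n Hq, C₂p * (K * (C₂p * X)) = C₂p * X := fun X => by
    simpa only [Matrix.mul_assoc, mul_mul_of_mul_eq a₄] using mul_mul_of_mul_eq h₂.2.1 X
  have r₃ : ∀ X : Matrix p n Hq, C₃p * (K * (C₃p * X)) = C₃p * X := fun X => by
    simpa only [Matrix.mul_assoc, mul_mul_of_mul_eq a₅] using mul_mul_of_mul_eq h₃.2.1 X
  have s₁ : etaCT η C₁p * (etaCT η K * etaCT η C₁p) = etaCT η C₁p := by
    simpa only [etaCT_mul hη, Matrix.mul_assoc, q₁] using congrArg (etaCT η) h₁.2.1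
  have s₂ : etaCT η C₂p * (etaCT η K * etaCT η C₂p) = etaCT η C₂p := by
    simpa only [etaCT_mul hη, Matrix.mul_assoc, q₄] using congrArg (etaCT η) h₂.2.1
  have s₃ : etaCT η C₃p * (etaCT η K * etaCT η C₃p) = etaCT η C₃p := by
    simpa only [etaCT_mul hη, Matrix.mul_assoc, q₅] using congrArg (etaCT η) h₃.2.1
  have s₄ : etaCT η C₄p * (etaCT η K * etaCT η C₄p) = etaCT η C₄p := by
    simpa only [etaCT_mul hη, Matrix.mul_assoc] using congrArg (etaCT η) h₄.2.1
  have s₆ : etaCT η C₁p * (etaCT η K * etaCT η C₂p) = etaCT η C₁p := by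
    simpa only [etaCT_mul hη, Matrix.mul_assoc, q₄] using congrArg (etaCT η) a₆
  constructor <;>
    simp only [etaCT_mul hη, Matrix.mul_assoc, q₁, q₄, q₅, mul_mul_of_mul_eq a₁,
      mul_mul_of_mul_eq a₄, mul_mul_of_mul_eq a₅, r₁, r₂, r₃, s₁, s₂, s₃, s₄, s₆, d₁, d₂, d₃, d₄,
      d₅, d₆]

variable [DecidableEq p] [DecidableEq n] (hη : η * η = -1) (hRa : IsStarProjection Ra)
  (hRb : IsStarProjection Rb) (hC : IsStarProjection C) (hCRa : C * Ra = C) (hCRb : C * Rb = C)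
  {T : Matrix p p Hq} (hT : etaCT η T = T) {C₁ C₂ C₃ : Matrix p n Hq} (hC₁ : C₁ = C * K)
  (hC₂ : C₂ = Ra * K) (hC₃ : C₃ = Rb * K) (h₁ : IsMPInv C₁ C₁p) (h₂ : IsMPInv C₂ C₂p)
  (h₃ : IsMPInv C₃ C₃p) (h₄ : IsMPInv K C₄p) {E₁ E₂ E₃ E₄ : Matrix p p Hq} (hE₁ : E₁ = C * T)
  (hE₂ : E₂ = Ra * T * etaCT η Rb) (hE₃ : E₃ = Rb * T * etaCT η Ra) (hE₄ : E₄ = T * etaCT η C)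
  {C₁₁ : Matrix n (n ⊕ n) Hq} (hC₁₁ : C₁₁ = fromCols (1 - C₂p * C₂) (1 - C₄p * K))
  {C₁₁p : Matrix (n ⊕ n) n Hq} (hC₁₁p : IsMPInv C₁₁ C₁₁p) {E₂₂ : Matrix n n Hq}
  (hE₂₂ : E₂₂ = (1 - C₁₁ * C₁₁p) * (1 - C₃p * C₃)) {E₂₂p : Matrix n n Hq}
  (hE₂₂p : IsMPInv E₂₂ E₂₂p) {F₁ F₂ : Matrix n n Hq}
  (hF₁ : F₁ = C₁p * E₁ * etaCT η C₄p + (1 - C₁p * C₁) * C₂p * E₂ * etaCT η C₃p)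
  (hF₂ : F₂ = C₃p * E₃ * etaCT η C₂p + (1 - C₃p * C₃) * C₄p * E₄ * etaCT η C₁p)
  {E : Matrix n n Hq} (hE : E = (1 - C₁₁ * C₁₁p) * (F₂ - F₁) * etaCT η (1 - C₁₁ * C₁₁p))

include hη hRa hRb hC hCRa hCRb hT hC₁ hC₂ hC₃ h₁ h₂ h₃ h₄ hE₁ hE₂ hE₃ hE₄ hC₁₁ hC₁₁p hE₂₂ hE₂₂p
  hF₁ hF₂ hE

theorem exists_four_iff_of_ranges (g₁ : (1 - C₁ * C₁p) * E₁ = 0)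
    (g₂ : (1 - C₂ * C₂p) * E₂ = 0) (g₃ : (1 - C₃ * C₃p) * E₃ = 0) (g₄ : (1 - K * C₄p) * E₄ = 0) :
    (∃ Y : Matrix n n Hq, C₁ * Y * etaCT η K = E₁ ∧ C₂ * Y * etaCT η C₃ = E₂ ∧
        C₃ * Y * etaCT η C₂ = E₃ ∧ K * Y * etaCT η C₁ = E₄) ↔
      (1 - E₂₂ * E₂₂p) * E * etaCT η (1 - E₂₂ * E₂₂p) = 0 := by
  subst hC₁ hC₂ hC₃ hE₁ hE₂ hE₃ hE₄ hC₁₁ hE₂₂ hF₁ hF₂ hE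
  have hP := isProjDiamond_of_nested hCRa hCRb h₁ h₂ h₃ h₄
  have hR : 1 - fromCols (1 - C₂p * (Ra * K)) (1 - C₄p * K) * C₁₁p = C₂p * (Ra * K) := by
    refine (congrArg _ (IsMPInv.fromCols_mul_inv_eq hP.isStarProjection₂.one_sub ?_ hC₁₁p)).trans
      (sub_sub_cancel _ _)
    rw [Matrix.sub_mul, Matrix.one_mul, Matrix.mul_sub, Matrix.mul_one, hP.mul₂₄]
    abel
  rw [hR] at hE₂₂p ⊢
  have hconj : ∀ R S : Matrix p p Hq, etaCT η (R * T * etaCT η S) = S * T * etaCT η R :=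
    fun R S => by simp only [etaCT_mul hη, etaCT_etaCT hη, hT, Matrix.mul_assoc]
  have m₁ := etaCT_mul_etaCT_eq_of_one_sub_mul_eq_zero hη g₁
  have m₂ := etaCT_mul_etaCT_eq_of_one_sub_mul_eq_zero hη g₂
  have m₃ := etaCT_mul_etaCT_eq_of_one_sub_mul_eq_zero hη g₃
  have m₄ := etaCT_mul_etaCT_eq_of_one_sub_mul_eq_zero hη g₄
  rw [hconj] at m₂ m₃
  rw [etaCT_mul hη, hT] at m₁
  rw [etaCT_mul hη, etaCT_etaCT hη, hT] at m₄
  simp only [mul_mul_etaCT_eq_iff hη h₁ h₄ (mul_eq_self_of_one_sub_mul_eq_zero g₁) m₄,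
    mul_mul_etaCT_eq_iff hη h₂ h₃ (mul_eq_self_of_one_sub_mul_eq_zero g₂) m₃,
    mul_mul_etaCT_eq_iff hη h₃ h₂ (mul_eq_self_of_one_sub_mul_eq_zero g₃) m₂,
    mul_mul_etaCT_eq_iff hη h₄ h₁ (mul_eq_self_of_one_sub_mul_eq_zero g₄) m₁]
  convert hP.exists_sandwich_iff hη
    (cornerCompatible_of_nested hη hRa hRb hC hCRa hCRb hT h₁ h₂ h₃ h₄ g₂ g₃ g₄) hE₂₂p using 3
  simp only [Matrix.mul_assoc]

theorem exists_etaHermitian_nested_iff :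
    (∃ Y : Matrix n n Hq, etaCT η Y = Y ∧ C₁ * Y * etaCT η K = E₁ ∧ C₂ * Y * etaCT η C₃ = E₂) ↔
      ((1 - C₁ * C₁p) * E₁ = 0 ∧ (1 - C₂ * C₂p) * E₂ = 0 ∧ (1 - C₃ * C₃p) * E₃ = 0 ∧
        (1 - K * C₄p) * E₄ = 0 ∧ (1 - E₂₂ * E₂₂p) * E * etaCT η (1 - E₂₂ * E₂₂p) = 0) := by
  have hE₃' : etaCT η E₂ = E₃ := by
    rw [hE₂, hE₃]
    simp only [etaCT_mul hη, etaCT_etaCT hη, hT, Matrix.mul_assoc]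
  have hE₄' : etaCT η E₁ = E₄ := by rw [hE₁, hE₄, etaCT_mul hη, hT]
  have key := exists_four_iff_of_ranges hη hRa hRb hC hCRa hCRb hT hC₁ hC₂ hC₃ h₁ h₂ h₃ h₄ hE₁
    hE₂ hE₃ hE₄ hC₁₁ hC₁₁p hE₂₂ hE₂₂p hF₁ hF₂ hE
  rw [exists_etaHermitian_iff_exists_four hη, hE₃', hE₄']
  constructor
  · rintro ⟨Y, e₁, e₂, e₃, e₄⟩
    have g₁ : (1 - C₁ * C₁p) * E₁ = 0 := by rw [← e₁, h₁.one_sub_mul_inv_mul_mul_eq_zero]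
    have g₂ : (1 - C₂ * C₂p) * E₂ = 0 := by rw [← e₂, h₂.one_sub_mul_inv_mul_mul_eq_zero]
    have g₃ : (1 - C₃ * C₃p) * E₃ = 0 := by rw [← e₃, h₃.one_sub_mul_inv_mul_mul_eq_zero]
    have g₄ : (1 - K * C₄p) * E₄ = 0 := by rw [← e₄, h₄.one_sub_mul_inv_mul_mul_eq_zero]
    exact ⟨g₁, g₂, g₃, g₄, (key g₁ g₂ g₃ g₄).1 ⟨Y, e₁, e₂, e₃, e₄⟩⟩
  · rintro ⟨g₁, g₂, g₃, g₄, g₅⟩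
    exact (key g₁ g₂ g₃ g₄).2 g₅

end Nested

section Reduction

variable {η : Hq} {m k n : Type*} [Fintype m] [DecidableEq m] [Fintype k] [Fintype n]

theorem exists_mul_add_etaCT_add_eq_iff (hη : η * η = -1) {A : Matrix m k Hq}
    {Ap : Matrix k m Hq} (h : IsMPInv A Ap) {S B : Matrix m m Hq} (hS : etaCT η S = S)
    (hB : etaCT η B = B) :
    (∃ X : Matrix k m Hq, A * X + etaCT η (A * X) + S = B) ↔
      (1 - A * Ap) * S * etaCT η (1 - A * Ap) = (1 - A * Ap) * B * etaCT η (1 - A * Ap) := by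
  have hD : etaCT η (B - S) = B - S := by rw [etaCT_sub, hS, hB]
  calc (∃ X : Matrix k m Hq, A * X + etaCT η (A * X) + S = B)
      ↔ ∃ X : Matrix k m Hq, A * X + etaCT η (A * X) = B - S :=
        exists_congr fun _ => eq_sub_iff_add_eq.symm
    _ ↔ (1 - A * Ap) * (B - S) * etaCT η (1 - A * Ap) = 0 := exists_mul_add_etaCT_eq_iff hη h hD
    _ ↔ _ := by rw [Matrix.mul_sub, Matrix.sub_mul, sub_eq_zero, eq_comm]

theorem exists_mul_add_etaCT_add_sandwiches_eq_iff (hη : η * η = -1) {A₁ : Matrix m k Hq}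
    {A₁p : Matrix k m Hq} (h : IsMPInv A₁ A₁p) {l₂ l₃ l₄ : Type*} [Fintype l₂] [Fintype l₃]
    [Fintype l₄] {A₂ : Matrix m l₂ Hq} {A₃ : Matrix m l₃ Hq} {A₄ : Matrix m l₄ Hq}
    {Y₁ : Matrix l₂ l₂ Hq} {Y₂ : Matrix l₃ l₃ Hq} {Y₃ : Matrix l₄ l₄ Hq} (hY₁ : etaCT η Y₁ = Y₁)
    (hY₂ : etaCT η Y₂ = Y₂) (hY₃ : etaCT η Y₃ = Y₃) {B : Matrix m m Hq} (hB : etaCT η B = B) :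
    (∃ X : Matrix k m Hq, A₁ * X + etaCT η (A₁ * X) + A₂ * Y₁ * etaCT η A₂
        + A₃ * Y₂ * etaCT η A₃ + A₄ * Y₃ * etaCT η A₄ = B) ↔
      (1 - A₁ * A₁p) * A₂ * Y₁ * etaCT η ((1 - A₁ * A₁p) * A₂)
        + (1 - A₁ * A₁p) * A₃ * Y₂ * etaCT η ((1 - A₁ * A₁p) * A₃)
        + (1 - A₁ * A₁p) * A₄ * Y₃ * etaCT η ((1 - A₁ * A₁p) * A₄)
        = (1 - A₁ * A₁p) * B * etaCT η (1 - A₁ * A₁p) := by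
  have hS : etaCT η (A₂ * Y₁ * etaCT η A₂ + A₃ * Y₂ * etaCT η A₃ + A₄ * Y₃ * etaCT η A₄)
      = A₂ * Y₁ * etaCT η A₂ + A₃ * Y₂ * etaCT η A₃ + A₄ * Y₃ * etaCT η A₄ := by
    simp only [etaCT_add, etaCT_mul hη, etaCT_etaCT hη, hY₁, hY₂, hY₃, Matrix.mul_assoc]
  calc _ ↔ ∃ X : Matrix k m Hq, A₁ * X + etaCT η (A₁ * X)
        + (A₂ * Y₁ * etaCT η A₂ + A₃ * Y₂ * etaCT η A₃ + A₄ * Y₃ * etaCT η A₄) = B :=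
        exists_congr fun _ => by simp only [add_assoc]
    _ ↔ _ := exists_mul_add_etaCT_add_eq_iff hη h hS hB
    _ ↔ _ := by simp only [Matrix.mul_add, Matrix.add_mul, etaCT_mul hη, Matrix.mul_assoc]

theorem exists_solution_iff_of_etaHermitian (hη : η * η = -1) {l₂ l₃ l₄ : Type*} [Fintype l₂]
    [DecidableEq l₂] [Fintype l₃] [DecidableEq l₃] [Fintype l₄] {A₁ : Matrix m k Hq}
    {A₁p : Matrix k m Hq} (hA₁p : IsMPInv A₁ A₁p) {A₂ A₁₁ : Matrix m l₂ Hq}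
    {A₃ A₂₂ M : Matrix m l₃ Hq} {A₄ A₃₃ : Matrix m l₄ Hq} (hA₁₁ : A₁₁ = (1 - A₁ * A₁p) * A₂)
    (hA₂₂ : A₂₂ = (1 - A₁ * A₁p) * A₃) (hA₃₃ : A₃₃ = (1 - A₁ * A₁p) * A₄) {A₁₁p : Matrix l₂ m Hq}
    {A₂₂p Mp : Matrix l₃ m Hq} (hA₁₁p : IsMPInv A₁₁ A₁₁p) (hA₂₂p : IsMPInv A₂₂ A₂₂p)
    (hM : M = (1 - A₁₁ * A₁₁p) * A₂₂) (hMp : IsMPInv M Mp) {B T C : Matrix m m Hq}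
    (hB : etaCT η B = B) (hT : T = (1 - A₁ * A₁p) * B * etaCT η (1 - A₁ * A₁p))
    (hC : C = (1 - M * Mp) * (1 - A₁₁ * A₁₁p)) {Y₃ : Matrix l₄ l₄ Hq} (hY₃ : etaCT η Y₃ = Y₃) :
    (∃ (X : Matrix k m Hq) (Y₁ : Matrix l₂ l₂ Hq) (Y₂ : Matrix l₃ l₃ Hq), etaCT η Y₁ = Y₁ ∧
        etaCT η Y₂ = Y₂ ∧ A₁ * X + etaCT η (A₁ * X) + A₂ * Y₁ * etaCT η A₂
          + A₃ * Y₂ * etaCT η A₃ + A₄ * Y₃ * etaCT η A₄ = B) ↔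
      C * A₃₃ * Y₃ * etaCT η A₃₃ = C * T ∧
        (1 - A₁₁ * A₁₁p) * A₃₃ * Y₃ * etaCT η ((1 - A₂₂ * A₂₂p) * A₃₃)
          = (1 - A₁₁ * A₁₁p) * T * etaCT η (1 - A₂₂ * A₂₂p) := by
  have hT' : etaCT η T = T := by
    rw [hT]
    simp only [etaCT_mul hη, etaCT_etaCT hη, hB, Matrix.mul_assoc]
  have hS : etaCT η (T - A₃₃ * Y₃ * etaCT η A₃₃) = T - A₃₃ * Y₃ * etaCT η A₃₃ := by
    simp only [etaCT_sub, etaCT_mul hη, etaCT_etaCT hη, hT', hY₃, Matrix.mul_assoc]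
  calc _ ↔ ∃ (Y₁ : Matrix l₂ l₂ Hq) (Y₂ : Matrix l₃ l₃ Hq), etaCT η Y₁ = Y₁ ∧ etaCT η Y₂ = Y₂ ∧
        ∃ X : Matrix k m Hq, A₁ * X + etaCT η (A₁ * X) + A₂ * Y₁ * etaCT η A₂
          + A₃ * Y₂ * etaCT η A₃ + A₄ * Y₃ * etaCT η A₄ = B :=
        ⟨fun ⟨X, Y₁, Y₂, hY₁, hY₂, h⟩ => ⟨Y₁, Y₂, hY₁, hY₂, X, h⟩,
          fun ⟨Y₁, Y₂, hY₁, hY₂, X, h⟩ => ⟨X, Y₁, Y₂, hY₁, hY₂, h⟩⟩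
    _ ↔ ∃ (Y₁ : Matrix l₂ l₂ Hq) (Y₂ : Matrix l₃ l₃ Hq), etaCT η Y₁ = Y₁ ∧ etaCT η Y₂ = Y₂ ∧
        A₁₁ * Y₁ * etaCT η A₁₁ + A₂₂ * Y₂ * etaCT η A₂₂ = T - A₃₃ * Y₃ * etaCT η A₃₃ := by
        refine exists_congr fun Y₁ => exists_congr fun Y₂ => ?_
        refine and_congr_right fun hY₁ => and_congr_right fun hY₂ => ?_
        rw [exists_mul_add_etaCT_add_sandwiches_eq_iff hη hA₁p hY₁ hY₂ hY₃ hB, eq_sub_iff_add_eq,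
          hT, hA₁₁, hA₂₂, hA₃₃]
    _ ↔ _ := exists_etaHermitian_two_sandwiches_iff hη hA₁₁p hA₂₂p hM hMp hS
    _ ↔ _ := by
        rw [← hC, Matrix.mul_sub, Matrix.mul_sub, Matrix.sub_mul, sub_eq_zero, sub_eq_zero]
        simp only [Matrix.mul_assoc, etaCT_mul hη]
        exact and_congr eq_comm eq_comm

theorem isStarProjection_one_sub_mul_one_sub {a : Matrix m k Hq} {ap : Matrix k m Hq}
    {b : Matrix m n Hq} {M : Matrix m n Hq} {Mp : Matrix n m Hq} (ha : IsMPInv a ap)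
    (hM : M = (1 - a * ap) * b) (hMp : IsMPInv M Mp) :
    IsStarProjection ((1 - M * Mp) * (1 - a * ap)) := by
  have hR := ha.isStarProjection_mul_inv.one_sub
  have hRM : (1 - a * ap) * (M * Mp) = M * Mp := by
    rw [hM, ← Matrix.mul_assoc, ← Matrix.mul_assoc, hR.isIdempotentElem.eq]
  have hMR : M * Mp * (1 - a * ap) = M * Mp :=
    hR.isSelfAdjoint.mul_eq_of_mul_eq_swap hMp.isStarProjection_mul_inv.isSelfAdjoint
      hMp.isStarProjection_mul_inv.isSelfAdjoint hRM
  refine hMp.isStarProjection_mul_inv.one_sub.mul hR ((Commute.one_left _).sub_left ?_)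
  rw [Commute, SemiconjBy, hMR, hRM]

end Reduction

theorem stmt14_general {p a a₂ a₃ a₄ : ℕ} (η : Hq) (hη : η = qi ∨ η = qj ∨ η = qk)
    (A₁ : Matrix (Fin p) (Fin a) Hq) (A₂ : Matrix (Fin p) (Fin a₂) Hq)
    (A₃ : Matrix (Fin p) (Fin a₃) Hq) (A₄ : Matrix (Fin p) (Fin a₄) Hq)
    (B : Matrix (Fin p) (Fin p) Hq) (hB : B = etaCT η B)
    (A₁p : Matrix (Fin a) (Fin p) Hq) (hA₁p : IsMPInv A₁ A₁p)
    (A₁₁ : Matrix (Fin p) (Fin a₂) Hq) (hA₁₁ : A₁₁ = (1 - A₁ * A₁p) * A₂)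
    (A₂₂ : Matrix (Fin p) (Fin a₃) Hq) (hA₂₂ : A₂₂ = (1 - A₁ * A₁p) * A₃)
    (A₃₃ : Matrix (Fin p) (Fin a₄) Hq) (hA₃₃ : A₃₃ = (1 - A₁ * A₁p) * A₄)
    (A₁₁p : Matrix (Fin a₂) (Fin p) Hq) (hA₁₁p : IsMPInv A₁₁ A₁₁p)
    (A₂₂p : Matrix (Fin a₃) (Fin p) Hq) (hA₂₂p : IsMPInv A₂₂ A₂₂p)
    (M₁ : Matrix (Fin p) (Fin a₃) Hq) (hM₁ : M₁ = (1 - A₁₁ * A₁₁p) * A₂₂)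
    (M₁p : Matrix (Fin a₃) (Fin p) Hq) (hM₁p : IsMPInv M₁ M₁p)
    (T₁ : Matrix (Fin p) (Fin p) Hq)
    (hT₁ : T₁ = (1 - A₁ * A₁p) * B * etaCT η (1 - A₁ * A₁p))
    (C : Matrix (Fin p) (Fin p) Hq) (hC : C = (1 - M₁ * M₁p) * (1 - A₁₁ * A₁₁p))
    (C₁ : Matrix (Fin p) (Fin a₄) Hq) (hC₁ : C₁ = C * A₃₃)
    (C₂ : Matrix (Fin p) (Fin a₄) Hq) (hC₂ : C₂ = (1 - A₁₁ * A₁₁p) * A₃₃)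
    (C₃ : Matrix (Fin p) (Fin a₄) Hq) (hC₃ : C₃ = (1 - A₂₂ * A₂₂p) * A₃₃)
    (C₄ : Matrix (Fin p) (Fin a₄) Hq) (hC₄ : C₄ = A₃₃)
    (E₁ : Matrix (Fin p) (Fin p) Hq) (hE₁ : E₁ = C * T₁)
    (E₂ : Matrix (Fin p) (Fin p) Hq)
    (hE₂ : E₂ = (1 - A₁₁ * A₁₁p) * T₁ * etaCT η (1 - A₂₂ * A₂₂p))
    (E₃ : Matrix (Fin p) (Fin p) Hq)
    (hE₃ : E₃ = (1 - A₂₂ * A₂₂p) * T₁ * etaCT η (1 - A₁₁ * A₁₁p))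
    (E₄ : Matrix (Fin p) (Fin p) Hq) (hE₄ : E₄ = T₁ * etaCT η C)
    (C₁p : Matrix (Fin a₄) (Fin p) Hq) (hC₁p : IsMPInv C₁ C₁p)
    (C₂p : Matrix (Fin a₄) (Fin p) Hq) (hC₂p : IsMPInv C₂ C₂p)
    (C₃p : Matrix (Fin a₄) (Fin p) Hq) (hC₃p : IsMPInv C₃ C₃p)
    (C₄p : Matrix (Fin a₄) (Fin p) Hq) (hC₄p : IsMPInv C₄ C₄p)
    (C₁₁ : Matrix (Fin a₄) (Fin a₄ ⊕ Fin a₄) Hq)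
    (hC₁₁ : C₁₁ = Matrix.fromCols (1 - C₂p * C₂) (1 - C₄p * C₄))
    (C₁₁p : Matrix (Fin a₄ ⊕ Fin a₄) (Fin a₄) Hq) (hC₁₁p : IsMPInv C₁₁ C₁₁p)
    (C₃₃ : Matrix (Fin a₄) (Fin a₄) Hq) (hC₃₃ : C₃₃ = 1 - C₃p * C₃)
    (E₂₂ : Matrix (Fin a₄) (Fin a₄) Hq) (hE₂₂ : E₂₂ = (1 - C₁₁ * C₁₁p) * C₃₃)
    (E₂₂p : Matrix (Fin a₄) (Fin a₄) Hq) (hE₂₂p : IsMPInv E₂₂ E₂₂p)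
    (F₁ : Matrix (Fin a₄) (Fin a₄) Hq)
    (hF₁ : F₁ = C₁p * E₁ * etaCT η C₄p + (1 - C₁p * C₁) * C₂p * E₂ * etaCT η C₃p)
    (F₂ : Matrix (Fin a₄) (Fin a₄) Hq)
    (hF₂ : F₂ = C₃p * E₃ * etaCT η C₂p + (1 - C₃p * C₃) * C₄p * E₄ * etaCT η C₁p)
    (F : Matrix (Fin a₄) (Fin a₄) Hq) (hF : F = F₂ - F₁)
    (E : Matrix (Fin a₄) (Fin a₄) Hq)
    (hE : E = (1 - C₁₁ * C₁₁p) * F * etaCT η (1 - C₁₁ * C₁₁p)) :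
    (∃ (X₁ : Matrix (Fin a) (Fin p) Hq) (Y₁ : Matrix (Fin a₂) (Fin a₂) Hq)
        (Y₂ : Matrix (Fin a₃) (Fin a₃) Hq) (Y₃ : Matrix (Fin a₄) (Fin a₄) Hq),
        Y₁ = etaCT η Y₁ ∧ Y₂ = etaCT η Y₂ ∧ Y₃ = etaCT η Y₃ ∧
        A₁ * X₁ + etaCT η (A₁ * X₁) + A₂ * Y₁ * etaCT η A₂
          + A₃ * Y₂ * etaCT η A₃ + A₄ * Y₃ * etaCT η A₄ = B) ↔
      ((1 - C₁ * C₁p) * E₁ = 0 ∧ (1 - C₂ * C₂p) * E₂ = 0 ∧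
       (1 - C₃ * C₃p) * E₃ = 0 ∧ (1 - C₄ * C₄p) * E₄ = 0 ∧
       (1 - E₂₂ * E₂₂p) * E * etaCT η (1 - E₂₂ * E₂₂p) = 0) := by
  have hη₂ := mul_self_eq_neg_one_of_eq_qi_or hη
  subst hC₄ hC₃₃ hF
  have hRa := hA₁₁p.isStarProjection_mul_inv.one_sub
  have hCRa : C * (1 - A₁₁ * A₁₁p) = C := by rw [hC, Matrix.mul_assoc, hRa.isIdempotentElem.eq]
  have hCRb : C * (1 - A₂₂ * A₂₂p) = C := by
    rw [Matrix.mul_sub, Matrix.mul_one, ← Matrix.mul_assoc, hC, Matrix.mul_assoc _ _ A₂₂, ← hM₁,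
      hM₁p.one_sub_mul_inv_mul, Matrix.zero_mul, sub_zero]
  have hT : etaCT η T₁ = T₁ := by
    rw [hT₁]
    simp only [etaCT_mul hη₂, etaCT_etaCT hη₂, ← hB, Matrix.mul_assoc]
  have hY := fun Y₃ (hY₃ : etaCT η Y₃ = Y₃) => exists_solution_iff_of_etaHermitian hη₂ hA₁p hA₁₁
    hA₂₂ hA₃₃ hA₁₁p hA₂₂p hM₁ hM₁p hB.symm hT₁ hC hY₃
  rw [← exists_etaHermitian_nested_iff hη₂ hRa hA₂₂p.isStarProjection_mul_inv.one_sub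
    (hC ▸ isStarProjection_one_sub_mul_one_sub hA₁₁p hM₁ hM₁p) hCRa hCRb hT hC₁ hC₂ hC₃ hC₁p hC₂p
    hC₃p hC₄p hE₁ hE₂ hE₃ hE₄ hC₁₁ hC₁₁p hE₂₂ hE₂₂p hF₁ hF₂ hE]
  rw [hC₁, hC₂, hC₃, hE₁, hE₂]
  constructor
  · rintro ⟨X₁, Y₁, Y₂, Y₃, hY₁, hY₂, hY₃, h⟩
    exact ⟨Y₃, hY₃.symm, (hY Y₃ hY₃.symm).1 ⟨X₁, Y₁, Y₂, hY₁.symm, hY₂.symm, h⟩⟩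
  · rintro ⟨Y₃, hY₃, h⟩
    obtain ⟨X₁, Y₁, Y₂, hY₁, hY₂, h⟩ := (hY Y₃ hY₃).2 h
    exact ⟨X₁, Y₁, Y₂, Y₃, hY₁.symm, hY₂.symm, hY₃.symm, h⟩

set_option maxHeartbeats 1000000 in
/-- Theorem 4.1 (1) ⇔ (2): solvability conditions for the η-Hermitian equation
`A₁X₁ + (A₁X₁)^{η*} + A₂Y₁A₂^{η*} + A₃Y₂A₃^{η*} + A₄Y₃A₄^{η*} = B`. -/
theorem stmt14 {p a a₂ a₃ a₄ : ℕ} (η : Hq) (hη : η = qi ∨ η = qj ∨ η = qk)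
    (A₁ : Matrix (Fin p) (Fin a) Hq) (A₂ : Matrix (Fin p) (Fin a₂) Hq)
    (A₃ : Matrix (Fin p) (Fin a₃) Hq) (A₄ : Matrix (Fin p) (Fin a₄) Hq)
    (B : Matrix (Fin p) (Fin p) Hq) (hB : B = etaCT η B)
    (A₁p : Matrix (Fin a) (Fin p) Hq) (hA₁p : IsMPInv A₁ A₁p)
    (A₁₁ : Matrix (Fin p) (Fin a₂) Hq) (hA₁₁ : A₁₁ = (1 - A₁ * A₁p) * A₂)
    (A₂₂ : Matrix (Fin p) (Fin a₃) Hq) (hA₂₂ : A₂₂ = (1 - A₁ * A₁p) * A₃)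
    (A₃₃ : Matrix (Fin p) (Fin a₄) Hq) (hA₃₃ : A₃₃ = (1 - A₁ * A₁p) * A₄)
    (A₁₁p : Matrix (Fin a₂) (Fin p) Hq) (hA₁₁p : IsMPInv A₁₁ A₁₁p)
    (A₂₂p : Matrix (Fin a₃) (Fin p) Hq) (hA₂₂p : IsMPInv A₂₂ A₂₂p)
    (M₁ : Matrix (Fin p) (Fin a₃) Hq) (hM₁ : M₁ = (1 - A₁₁ * A₁₁p) * A₂₂)
    (M₁p : Matrix (Fin a₃) (Fin p) Hq) (hM₁p : IsMPInv M₁ M₁p)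
    (T₁ : Matrix (Fin p) (Fin p) Hq)
    (hT₁ : T₁ = (1 - A₁ * A₁p) * B * etaCT η (1 - A₁ * A₁p))
    (C : Matrix (Fin p) (Fin p) Hq) (hC : C = (1 - M₁ * M₁p) * (1 - A₁₁ * A₁₁p))
    (C₁ : Matrix (Fin p) (Fin a₄) Hq) (hC₁ : C₁ = C * A₃₃)
    (C₂ : Matrix (Fin p) (Fin a₄) Hq) (hC₂ : C₂ = (1 - A₁₁ * A₁₁p) * A₃₃)
    (C₃ : Matrix (Fin p) (Fin a₄) Hq) (hC₃ : C₃ = (1 - A₂₂ * A₂₂p) * A₃₃)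
    (C₄ : Matrix (Fin p) (Fin a₄) Hq) (hC₄ : C₄ = A₃₃)
    (E₁ : Matrix (Fin p) (Fin p) Hq) (hE₁ : E₁ = C * T₁)
    (E₂ : Matrix (Fin p) (Fin p) Hq)
    (hE₂ : E₂ = (1 - A₁₁ * A₁₁p) * T₁ * etaCT η (1 - A₂₂ * A₂₂p))
    (E₃ : Matrix (Fin p) (Fin p) Hq)
    (hE₃ : E₃ = (1 - A₂₂ * A₂₂p) * T₁ * etaCT η (1 - A₁₁ * A₁₁p))
    (E₄ : Matrix (Fin p) (Fin p) Hq) (hE₄ : E₄ = T₁ * etaCT η C)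
    (C₁p : Matrix (Fin a₄) (Fin p) Hq) (hC₁p : IsMPInv C₁ C₁p)
    (C₂p : Matrix (Fin a₄) (Fin p) Hq) (hC₂p : IsMPInv C₂ C₂p)
    (C₃p : Matrix (Fin a₄) (Fin p) Hq) (hC₃p : IsMPInv C₃ C₃p)
    (C₄p : Matrix (Fin a₄) (Fin p) Hq) (hC₄p : IsMPInv C₄ C₄p)
    (C₁₁ : Matrix (Fin a₄) (Fin a₄ ⊕ Fin a₄) Hq)
    (hC₁₁ : C₁₁ = Matrix.fromCols (1 - C₂p * C₂) (1 - C₄p * C₄))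
    (C₁₁p : Matrix (Fin a₄ ⊕ Fin a₄) (Fin a₄) Hq) (hC₁₁p : IsMPInv C₁₁ C₁₁p)
    (C₂₂ : Matrix (Fin a₄) (Fin a₄) Hq) (hC₂₂ : C₂₂ = 1 - C₁p * C₁)
    (C₃₃ : Matrix (Fin a₄) (Fin a₄) Hq) (hC₃₃ : C₃₃ = 1 - C₃p * C₃)
    (E₁₁ : Matrix (Fin a₄) (Fin a₄) Hq) (hE₁₁ : E₁₁ = (1 - C₁₁ * C₁₁p) * C₂₂)
    (E₂₂ : Matrix (Fin a₄) (Fin a₄) Hq) (hE₂₂ : E₂₂ = (1 - C₁₁ * C₁₁p) * C₃₃)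
    (E₂₂p : Matrix (Fin a₄) (Fin a₄) Hq) (hE₂₂p : IsMPInv E₂₂ E₂₂p)
    (F₁ : Matrix (Fin a₄) (Fin a₄) Hq)
    (hF₁ : F₁ = C₁p * E₁ * etaCT η C₄p + (1 - C₁p * C₁) * C₂p * E₂ * etaCT η C₃p)
    (F₂ : Matrix (Fin a₄) (Fin a₄) Hq)
    (hF₂ : F₂ = C₃p * E₃ * etaCT η C₂p + (1 - C₃p * C₃) * C₄p * E₄ * etaCT η C₁p)
    (F : Matrix (Fin a₄) (Fin a₄) Hq) (hF : F = F₂ - F₁)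
    (E : Matrix (Fin a₄) (Fin a₄) Hq)
    (hE : E = (1 - C₁₁ * C₁₁p) * F * etaCT η (1 - C₁₁ * C₁₁p)) :
    (∃ (X₁ : Matrix (Fin a) (Fin p) Hq) (Y₁ : Matrix (Fin a₂) (Fin a₂) Hq)
        (Y₂ : Matrix (Fin a₃) (Fin a₃) Hq) (Y₃ : Matrix (Fin a₄) (Fin a₄) Hq),
        Y₁ = etaCT η Y₁ ∧ Y₂ = etaCT η Y₂ ∧ Y₃ = etaCT η Y₃ ∧
        A₁ * X₁ + etaCT η (A₁ * X₁) + A₂ * Y₁ * etaCT η A₂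
          + A₃ * Y₂ * etaCT η A₃ + A₄ * Y₃ * etaCT η A₄ = B) ↔
      ((1 - C₁ * C₁p) * E₁ = 0 ∧ (1 - C₂ * C₂p) * E₂ = 0 ∧
       (1 - C₃ * C₃p) * E₃ = 0 ∧ (1 - C₄ * C₄p) * E₄ = 0 ∧
       (1 - E₂₂ * E₂₂p) * E * etaCT η (1 - E₂₂ * E₂₂p) = 0) :=
  stmt14_general η hη A₁ A₂ A₃ A₄ B hB A₁p hA₁p A₁₁ hA₁₁ A₂₂ hA₂₂ A₃₃ hA₃₃ A₁₁p hA₁₁p A₂₂p hA₂₂p M₁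
    hM₁ M₁p hM₁p T₁ hT₁ C hC C₁ hC₁ C₂ hC₂ C₃ hC₃ C₄ hC₄ E₁ hE₁ E₂ hE₂ E₃ hE₃ E₄ hE₄ C₁p hC₁p C₂p
    hC₂p C₃p hC₃p C₄p hC₄p C₁₁ hC₁₁ C₁₁p hC₁₁p C₃₃ hC₃₃ E₂₂ hE₂₂ E₂₂p hE₂₂p F₁ hF₁ F₂ hF₂ F hF E hE
end
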